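/- arXiv:2406.06148 — 7 statements merged into one kernel-verified Lean document; each statement's English description precedes it below -/
import Mathlib

section
/- Let $L \subseteq \overline{\mathbb{Q}}$ be a totally imaginary number field, $K \subseteq L$ a CM-subfield with CM-type $\Phi_K$, and $\Phi$ the CM-type of $L$ lifted from $\Phi_K$. Let $\alpha_0 : J_K \to \mathbb{Z}_{\geq 0}$ satisfy $\alpha_0(\sigma) \geq 1$ for all $\sigma \in \Phi_K$ and $\alpha_0(\sigma) = 0$ for $\sigma \notin \Phi_K$, and define $\alpha : J_L \to \mathbb{Z}_{\geq 0}$ by $\alpha(\sigma) = \alpha_0(\sigma|_K)$. Let $L^{\alpha} \subseteq \overline{\mathbb{Q}}$ be the fixed field of the stabilizer $\{\tau \in G_{\mathbb{Q}} : \tau\alpha = \alpha\}$ and let $E \subseteq \overline{\mathbb{Q}}$ be the fixed field of the stabilizer $\{\tau \in G_{\mathbb{Q}} : \tau \circ \Phi_K = \Phi_K\}$ (the reflex field of $(K,\Phi_K)$). Then $E \subseteq L^{\alpha}$ and $L^{\alpha}$ is a CM-field. -/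
/-!
STATEMENT 0: Let `L ⊆ ℚ̄` be a totally imaginary number field, `K ⊆ L` a CM-subfield
with CM-type `Φ_K`, and `Φ` the CM-type of `L` lifted from `Φ_K`.  Let
`α₀ : J_K → ℤ_{≥0}` satisfy `α₀(σ) ≥ 1` for `σ ∈ Φ_K` and `α₀(σ) = 0` for `σ ∉ Φ_K`,
and define `α : J_L → ℤ_{≥0}` by `α(σ) = α₀(σ|_K)`.  Let `L^α` be the fixed field of the
stabilizer of `α` in `G_ℚ` and `E` the fixed field of the stabilizer of `Φ_K`
(the reflex field of `(K, Φ_K)`).  Then `E ⊆ L^α` and `L^α` is a CM-field.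

`ℚ̄` is modelled as an algebraic closure of `ℚ` equipped with an embedding `emb` into
`ℂ`, and `c : ℚ̄ ≃ₐ[ℚ] ℚ̄` is complex conjugation restricted to `ℚ̄` (i.e. it is
compatible with conjugation on `ℂ` via `emb`).
-/

variable {Qbar : Type*} [Field Qbar] [Algebra ℚ Qbar]

/-- the action of `Gal(ℚ̄/ℚ)` on embeddings `F ↪ ℚ̄`, by composition -/
def gact {F : IntermediateField ℚ Qbar} (τ : Qbar ≃ₐ[ℚ] Qbar) (σ : ↥F →+* Qbar) :
    ↥F →+* Qbar :=
  (τ : Qbar →ₐ[ℚ] Qbar).toRingHom.comp σ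

lemma gact_gact {F : IntermediateField ℚ Qbar} (τ₁ τ₂ : Qbar ≃ₐ[ℚ] Qbar)
    (σ : ↥F →+* Qbar) : gact τ₁ (gact τ₂ σ) = gact (τ₁ * τ₂) σ := rfl

lemma gact_one {F : IntermediateField ℚ Qbar} (σ : ↥F →+* Qbar) : gact 1 σ = σ := rfl

/-- the stabilizer `{τ ∈ G_ℚ : τμ = μ}` of `μ : J_F → ℤ`, where `(τμ)(σ) = μ(τ⁻¹ ∘ σ)` -/
def stab {F : IntermediateField ℚ Qbar} (μ : (↥F →+* Qbar) → ℤ) :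
    Subgroup (Qbar ≃ₐ[ℚ] Qbar) where
  carrier := {τ | ∀ σ, μ (gact τ⁻¹ σ) = μ σ}
  one_mem' := by intro σ; rw [inv_one, gact_one]
  mul_mem' := by
    intro a b ha hb σ
    have : gact (a * b)⁻¹ σ = gact b⁻¹ (gact a⁻¹ σ) := by
      rw [gact_gact, mul_inv_rev]
    rw [this, hb, ha]
  inv_mem' := by
    intro a ha σ
    have := ha (gact a⁻¹⁻¹ σ)
    rw [gact_gact, mul_inv_cancel, gact_one] at this
    exact this.symm

/-- the stabilizer `{τ ∈ G_ℚ : τ ∘ Φ = Φ}` of a set of embeddings `Φ ⊆ J_F` -/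
def setStab {F : IntermediateField ℚ Qbar} (Φ : Set (↥F →+* Qbar)) :
    Subgroup (Qbar ≃ₐ[ℚ] Qbar) where
  carrier := {τ | gact τ '' Φ = Φ}
  one_mem' := by
    show gact (1 : Qbar ≃ₐ[ℚ] Qbar) '' Φ = Φ
    have : gact (1 : Qbar ≃ₐ[ℚ] Qbar) = (id : (↥F →+* Qbar) → _) := funext fun σ => gact_one σ
    rw [this, Set.image_id]
  mul_mem' := by
    intro a b ha hb
    show gact (a * b) '' Φ = Φ
    have : gact (a * b) '' Φ = gact a '' (gact b '' Φ) := by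
      rw [Set.image_image]
      exact Set.image_congr fun σ _ => (gact_gact a b σ).symm
    rw [this, hb, ha]
  inv_mem' := by
    intro a ha
    show gact a⁻¹ '' Φ = Φ
    conv_lhs => rw [← ha]
    rw [Set.image_image]
    have : ∀ σ ∈ Φ, gact a⁻¹ (gact a σ) = σ := fun σ _ => by
      rw [gact_gact, inv_mul_cancel, gact_one]
    rw [Set.image_congr this, Set.image_id']

section CM

variable (c : Qbar ≃ₐ[ℚ] Qbar)

/-- `K` is a CM-field: it admits an automorphism `c_K ≠ id` with `σ ∘ c_K = c ∘ σ`
for every embedding `σ : K ↪ ℚ̄`. -/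
def IsCMField (K : IntermediateField ℚ Qbar) : Prop :=
  ∃ cK : ↥K ≃+* ↥K, cK ≠ RingEquiv.refl ↥K ∧
    ∀ (σ : ↥K →+* Qbar) (x : ↥K), σ (cK x) = c (σ x)

/-- `Φ` is a CM-type of `K`: `Φ ∩ cΦ = ∅` and `Φ ∪ cΦ = J_K`. -/
def IsCMType {K : IntermediateField ℚ Qbar} (Φ : Set (↥K →+* Qbar)) : Prop :=
  Φ ∩ (gact c '' Φ) = ∅ ∧ Φ ∪ (gact c '' Φ) = Set.univ

/-- the inclusion `K → L` of intermediate fields, as a ring homomorphism -/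
def incl {K L : IntermediateField ℚ Qbar} (hKL : K ≤ L) : ↥K →+* ↥L where
  toFun x := ⟨x.1, hKL x.2⟩
  map_one' := rfl
  map_mul' _ _ := rfl
  map_zero' := rfl
  map_add' _ _ := rfl

/-- the restriction `σ|_K` of an embedding `σ : L ↪ ℚ̄` to a subfield `K ⊆ L` -/
def res {K L : IntermediateField ℚ Qbar} (hKL : K ≤ L) (σ : ↥L →+* Qbar) :
    ↥K →+* Qbar :=
  σ.comp (incl hKL)

/-- the lift to `L` of a set of embeddings of a subfield `K ⊆ L` -/
def liftType {K L : IntermediateField ℚ Qbar} (hKL : K ≤ L)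
    (ΦK : Set (↥K →+* Qbar)) : Set (↥L →+* Qbar) :=
  {σ | res hKL σ ∈ ΦK}

/-- `L` is totally imaginary: `c ∘ σ ≠ σ` for every embedding `σ : L ↪ ℚ̄`
(equivalently, no embedding of `L` into `ℂ` has image contained in `ℝ`). -/
def TotallyImaginary (L : IntermediateField ℚ Qbar) : Prop :=
  ∀ σ : ↥L →+* Qbar, gact c σ ≠ σ

end CM


/-! ### Auxiliary lemmas -/

section Aux

variable {Qbar : Type*} [Field Qbar] [Algebra ℚ Qbar]

lemma my_mem_fixedField_iff {E : Type*} [Field E] [Algebra ℚ E] (H : Subgroup (E ≃ₐ[ℚ] E))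
    (x : E) : x ∈ IntermediateField.fixedField H ↔ ∀ τ ∈ H, τ x = x :=
  ⟨fun hx τ hτ => hx ⟨τ, hτ⟩, fun hx g => hx g g.2⟩

lemma res_gact {K L : IntermediateField ℚ Qbar} (hKL : K ≤ L) (τ : Qbar ≃ₐ[ℚ] Qbar)
    (σ : ↥L →+* Qbar) : res hKL (gact τ σ) = gact τ (res hKL σ) := rfl

lemma my_normal_transfer {M : Type*} [Field M] (i1 i2 : Algebra ℚ M)
    (h : @Normal ℚ M _ _ i1) : @Normal ℚ M _ _ i2 := by
  obtain rfl : i1 = i2 := Subsingleton.elim i1 i2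
  exact h

lemma my_fd_transfer {M : Type*} [AddCommGroup M] (i1 i2 : Module ℚ M)
    (h : @FiniteDimensional ℚ M _ _ i1) : @FiniteDimensional ℚ M _ _ i2 := by
  obtain rfl : i1 = i2 := Subsingleton.elim i1 i2
  exact h

variable [IsAlgClosure ℚ Qbar]

lemma my_mem_of_fixed (F : IntermediateField ℚ Qbar) (x : Qbar)
    (hx : ∀ τ : Qbar ≃ₐ[ℚ] Qbar, (∀ y ∈ F, τ y = y) → τ x = x) : x ∈ F := by
  haveI : IsAlgClosed Qbar := IsAlgClosure.isAlgClosed ℚ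
  haveI : Algebra.IsAlgebraic ℚ Qbar := IsAlgClosure.isAlgebraic
  haveI : Algebra.IsAlgebraic ↥F Qbar := Algebra.IsAlgebraic.tower_top (K := ℚ) ↥F
  haveI : IsAlgClosure ↥F Qbar := ⟨‹_›, ‹_›⟩
  haveI : CharZero ↥F := charZero_of_injective_algebraMap (algebraMap ℚ ↥F).injective
  by_contra hxF
  have hint : IsIntegral ↥F x := (Algebra.IsAlgebraic.isAlgebraic (R := ↥F) x).isIntegral
  have hsep : (minpoly ↥F x).Separable := (minpoly.irreducible hint).separable
  have hcard : Fintype.card ((minpoly ↥F x).rootSet Qbar) = (minpoly ↥F x).natDegree :=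
    Polynomial.card_rootSet_eq_natDegree hsep (IsAlgClosed.splits _)
  have h2 : 2 ≤ (minpoly ↥F x).natDegree := by
    rw [minpoly.two_le_natDegree_iff hint]
    rintro ⟨y, rfl⟩
    exact hxF y.2
  have hxmem : x ∈ (minpoly ↥F x).rootSet Qbar :=
    Polynomial.mem_rootSet.2 ⟨minpoly.ne_zero hint, minpoly.aeval _ _⟩
  have h3 : 1 < Fintype.card ((minpoly ↥F x).rootSet Qbar) := by rw [hcard]; omega
  obtain ⟨y, hy⟩ := Fintype.exists_ne_of_one_lt_card h3
    (⟨x, hxmem⟩ : (minpoly ↥F x).rootSet Qbar)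
  have hyroot : Polynomial.aeval (y : Qbar) (minpoly ↥F x) = 0 := (Polynomial.mem_rootSet.1 y.2).2
  obtain ⟨σ, hσ⟩ := minpoly.exists_algEquiv_of_root (Algebra.IsAlgebraic.isAlgebraic x) hyroot
  have hσx : σ.symm x = (y : Qbar) := by
    apply σ.injective; rw [hσ, AlgEquiv.apply_symm_apply]
  have hfix : ∀ z ∈ F, (σ.symm.restrictScalars ℚ) z = z := by
    intro z hz
    exact σ.symm.commutes ⟨z, hz⟩
  have hxx : σ.symm x = x := hx (σ.symm.restrictScalars ℚ) hfix
  exact hy (Subtype.ext (hσx.symm.trans hxx))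

lemma my_exists_extension (F : IntermediateField ℚ Qbar) (σ : ↥F →+* Qbar) :
    ∃ τ : Qbar ≃ₐ[ℚ] Qbar, ∀ x : ↥F, τ x = σ x := by
  haveI : IsAlgClosed Qbar := IsAlgClosure.isAlgClosed ℚ
  haveI : Algebra.IsAlgebraic ℚ Qbar := IsAlgClosure.isAlgebraic
  letI instF : Algebra ℚ ↥F := F.algebra'
  obtain ⟨φ, hφ⟩ := IntermediateField.exists_algHom_of_splits
    (F := ℚ) (E := Qbar) (K := Qbar)
    (fun s => ⟨(Algebra.IsAlgebraic.isAlgebraic s).isIntegral, IsAlgClosed.splits _⟩)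
    (L := F) ⟨σ, fun q => by
      show σ (algebraMap ℚ ↥F q) = algebraMap ℚ Qbar q
      rw [eq_ratCast (algebraMap ℚ ↥F) q, map_ratCast σ q, eq_ratCast (algebraMap ℚ Qbar) q]⟩
  refine ⟨AlgEquiv.ofBijective φ (Algebra.IsAlgebraic.algHom_bijective φ), fun x => ?_⟩
  exact AlgHom.congr_fun hφ x

lemma my_res_surjective (K L : IntermediateField ℚ Qbar)
    (hKL : K ≤ L) (ρ : ↥K →+* Qbar) : ∃ σ : ↥L →+* Qbar, res hKL σ = ρ := by
  letI : Algebra ℚ ↥L := L.algebra'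
  obtain ⟨τ, hτ⟩ := my_exists_extension K ρ
  refine ⟨((τ : Qbar →ₐ[ℚ] Qbar) : Qbar →+* Qbar).comp L.val.toRingHom, ?_⟩
  ext x
  exact hτ x

lemma my_findim (L : IntermediateField ℚ Qbar) [fd : FiniteDimensional ℚ L]
    (Lα : IntermediateField ℚ Qbar)
    (h : ∀ x ∈ Lα, ∀ τ : Qbar ≃ₐ[ℚ] Qbar, (∀ σ : ↥L →+* Qbar, gact τ σ = σ) → τ x = x) :
    FiniteDimensional ℚ ↥Lα := by
  letI : Algebra ℚ ↥L := L.algebra'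
  haveI fd' : @FiniteDimensional ℚ ↥L _ _ Algebra.toModule := my_fd_transfer _ _ fd
  set L' : IntermediateField ℚ Qbar := IntermediateField.normalClosure ℚ ↥L Qbar with hL'
  letI : Algebra ℚ ↥L' := L'.algebra'
  haveI fdL' : FiniteDimensional ℚ ↥L' :=
    my_fd_transfer _ _ (normalClosure.is_finiteDimensional ℚ ↥L Qbar)
  have hrange : ∀ (σ : ↥L →+* Qbar) (z : ↥L), σ z ∈ L' := by
    intro σ z
    exact AlgHom.fieldRange_le_normalClosure ⟨σ, fun q => by
      show σ (algebraMap ℚ ↥L q) = algebraMap ℚ Qbar q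
      rw [eq_ratCast (algebraMap ℚ ↥L) q, map_ratCast σ q, eq_ratCast (algebraMap ℚ Qbar) q]⟩
      ⟨z, rfl⟩
  have hsub : Lα ≤ L' := by
    intro x hx
    apply my_mem_of_fixed
    intro τ hτ
    apply h x hx τ
    intro σ
    ext z
    exact hτ (σ z) (hrange σ z)
  letI : Algebra ℚ ↥Lα := Lα.algebra'
  letI : Algebra ℚ ↥L' := L'.algebra'
  have hinj : Function.Injective (IntermediateField.inclusion hsub) :=
    (IntermediateField.inclusion hsub).toRingHom.injective
  exact my_fd_transfer _ _
    (FiniteDimensional.of_injective (IntermediateField.inclusion hsub).toLinearMap hinj)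

lemma my_closure (L : IntermediateField ℚ Qbar) [fd : FiniteDimensional ℚ L]
    (H : Subgroup (Qbar ≃ₐ[ℚ] Qbar))
    (hN : ∀ τ : Qbar ≃ₐ[ℚ] Qbar, (∀ σ : ↥L →+* Qbar, gact τ σ = σ) → τ ∈ H)
    (c : Qbar ≃ₐ[ℚ] Qbar) (hcf : ∀ x ∈ IntermediateField.fixedField H, c x = x) :
    c ∈ H := by
  haveI : IsAlgClosed Qbar := IsAlgClosure.isAlgClosed ℚ
  letI : Algebra ℚ ↥L := L.algebra'
  haveI fd' : @FiniteDimensional ℚ ↥L _ _ Algebra.toModule := my_fd_transfer _ _ fd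
  set L' : IntermediateField ℚ Qbar := IntermediateField.normalClosure ℚ ↥L Qbar with hL'
  letI : Algebra ℚ ↥L' := L'.algebra'
  haveI fdL' : FiniteDimensional ℚ ↥L' :=
    my_fd_transfer _ _ (normalClosure.is_finiteDimensional ℚ ↥L Qbar)
  have hrange : ∀ (σ : ↥L →+* Qbar) (z : ↥L), σ z ∈ L' := by
    intro σ z
    exact AlgHom.fieldRange_le_normalClosure ⟨σ, fun q => by
      show σ (algebraMap ℚ ↥L q) = algebraMap ℚ Qbar q
      rw [eq_ratCast (algebraMap ℚ ↥L) q, map_ratCast σ q, eq_ratCast (algebraMap ℚ Qbar) q]⟩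
      ⟨z, rfl⟩
  have hfixN : ∀ τ : Qbar ≃ₐ[ℚ] Qbar, (∀ y ∈ L', τ y = y) → τ ∈ H := by
    intro τ hτ
    apply hN
    intro σ
    ext z
    exact hτ (σ z) (hrange σ z)
  haveI : Normal ℚ ↥L' := normalClosure.normal ℚ ↥L Qbar
  set π := AlgEquiv.restrictNormalHom (F := ℚ) (K₁ := Qbar) ↥L' with hπ
  set H' : Subgroup (↥L' ≃ₐ[ℚ] ↥L') := H.map π with hH'
  have hup : ∀ y : ↥L', y ∈ IntermediateField.fixedField H' →
      (y : Qbar) ∈ IntermediateField.fixedField H := by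
    intro y hy
    rw [my_mem_fixedField_iff] at hy ⊢
    intro g hg
    have h5 : π g y = y := hy (π g) (Subgroup.mem_map_of_mem π hg)
    have h6 : ((π g y : ↥L') : Qbar) = g y := AlgEquiv.restrictNormalHom_apply L' g y
    rw [h5] at h6
    exact h6.symm
  have hπc : π c ∈ IntermediateField.fixingSubgroup (IntermediateField.fixedField H') := by
    rw [IntermediateField.mem_fixingSubgroup_iff]
    intro y hy
    have h7 : c y = y := hcf _ (hup y hy)
    apply Subtype.ext
    rw [hπ, AlgEquiv.restrictNormalHom_apply L' c y]
    exact h7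
  rw [@IntermediateField.fixingSubgroup_fixedField ℚ _ ↥L' _ _ H'
    (my_fd_transfer _ _ fdL')] at hπc
  obtain ⟨h, hh, hπh⟩ := hπc
  have hker : h⁻¹ * c ∈ H := by
    apply hfixN
    intro y hy
    have e1 : c y = ((π c ⟨y, hy⟩ : ↥L') : Qbar) :=
      (AlgEquiv.restrictNormalHom_apply L' c ⟨y, hy⟩).symm
    rw [← hπh] at e1
    have e2 : (h⁻¹ * c) y = h⁻¹ (c y) := by simp only [AlgEquiv.mul_apply]
    rw [e2, e1, hπ, AlgEquiv.restrictNormalHom_apply L' h ⟨y, hy⟩]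
    exact h.symm_apply_apply y
  have hfin := H.mul_mem hh hker
  rwa [← mul_assoc, mul_inv_cancel, one_mul] at hfin

end Aux

theorem statement0
    (Qbar : Type*) [Field Qbar] [Algebra ℚ Qbar] [IsAlgClosure ℚ Qbar]
    -- complex conjugation on `ℚ̄`, via an embedding of `ℚ̄` into `ℂ`
    (emb : Qbar →+* ℂ) (c : Qbar ≃ₐ[ℚ] Qbar)
    (hc : ∀ x : Qbar, emb (c x) = (starRingEnd ℂ) (emb x))
    (K L : IntermediateField ℚ Qbar) [FiniteDimensional ℚ L]
    (hKL : K ≤ L)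
    (hLim : TotallyImaginary c L)
    (hK : IsCMField c K)
    (ΦK : Set (↥K →+* Qbar)) (hΦK : IsCMType c ΦK)
    (Φ : Set (↥L →+* Qbar)) (hΦ : Φ = liftType hKL ΦK)
    (α₀ : (↥K →+* Qbar) → ℤ)
    (hα₀pos : ∀ σ ∈ ΦK, 1 ≤ α₀ σ) (hα₀supp : ∀ σ ∉ ΦK, α₀ σ = 0)
    (α : (↥L →+* Qbar) → ℤ)
    (hα : ∀ σ : ↥L →+* Qbar, α σ = α₀ (res hKL σ))
    (Lα E : IntermediateField ℚ Qbar)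
    (hLα : Lα = IntermediateField.fixedField (stab α))
    (hE : E = IntermediateField.fixedField (setStab ΦK)) :
    E ≤ Lα ∧ FiniteDimensional ℚ ↥Lα ∧ IsCMField c Lα  := by
  classical
  letI : Algebra ℚ ↥K := K.algebra'
  obtain ⟨cK, hcKne, hcKcomm⟩ := hK
  haveI : IsAlgClosed Qbar := IsAlgClosure.isAlgClosed ℚ
  haveI : Algebra.IsAlgebraic ℚ Qbar := IsAlgClosure.isAlgebraic
  -- `c` is an involution
  have hc2 : ∀ x : Qbar, c (c x) = x := by
    intro x
    apply emb.injective
    rw [hc, hc]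
    exact Complex.conj_conj _
  have hccmul : c * c = 1 := by
    apply AlgEquiv.ext
    intro x
    exact hc2 x
  have hcinv : c⁻¹ = c := inv_eq_of_mul_eq_one_right hccmul
  -- `cK` is an involution
  have hcK2 : ∀ x : ↥K, cK (cK x) = x := by
    intro x
    apply K.val.toRingHom.injective
    rw [hcKcomm K.val.toRingHom (cK x), hcKcomm K.val.toRingHom x, hc2]
  -- membership criterion for `Lα`
  have memLα : ∀ x : Qbar, x ∈ Lα ↔ ∀ τ ∈ stab α, τ x = x := by
    intro x
    rw [hLα]
    exact my_mem_fixedField_iff _ x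
  have hressur : ∀ ρ : ↥K →+* Qbar, ∃ σ : ↥L →+* Qbar, res hKL σ = ρ :=
    my_res_surjective K L hKL
  -- the support criterion for `ΦK`
  have hΦα : ∀ ρ, ρ ∈ ΦK ↔ α₀ ρ ≠ 0 := fun ρ =>
    ⟨fun h => by have := hα₀pos ρ h; omega,
     fun h => by by_contra hn; exact h (hα₀supp ρ hn)⟩
  -- `stab α ≤ setStab ΦK`, hence `E ≤ Lα`
  have hstabsub : stab α ≤ setStab ΦK := by
    intro τ hτ
    have hτ0 : ∀ σ : ↥L →+* Qbar, α (gact τ⁻¹ σ) = α σ := hτ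
    have key : ∀ ρ : ↥K →+* Qbar, gact τ⁻¹ ρ ∈ ΦK ↔ ρ ∈ ΦK := by
      intro ρ
      obtain ⟨σ, rfl⟩ := hressur ρ
      have h1 := hτ0 σ
      rw [hα, hα, res_gact] at h1
      rw [hΦα, hΦα, h1]
    show gact τ '' ΦK = ΦK
    ext ρ
    constructor
    · rintro ⟨ρ', hρ', rfl⟩
      refine (key (gact τ ρ')).mp ?_
      rw [gact_gact, inv_mul_cancel, gact_one]
      exact hρ'
    · intro hρ
      refine ⟨gact τ⁻¹ ρ, (key ρ).mpr hρ, ?_⟩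
      rw [gact_gact, mul_inv_cancel, gact_one]
  have hEL : E ≤ Lα := by
    intro x hx
    rw [hE, my_mem_fixedField_iff] at hx
    rw [memLα]
    exact fun τ hτ => hx τ (hstabsub hτ)
  -- elements fixing all embeddings of `L` lie in `stab α`
  have hN : ∀ τ : Qbar ≃ₐ[ℚ] Qbar, (∀ σ : ↥L →+* Qbar, gact τ σ = σ) → τ ∈ stab α := by
    intro τ hfix
    show ∀ σ : ↥L →+* Qbar, α (gact τ⁻¹ σ) = α σ
    intro σ
    have e : gact τ⁻¹ (gact τ σ) = σ := by rw [gact_gact, inv_mul_cancel, gact_one]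
    rw [hfix σ] at e
    rw [e]
  -- `Lα` is finite-dimensional
  have hFD : FiniteDimensional ℚ ↥Lα :=
    my_fd_transfer _ _
      (my_findim L Lα (fun x hx τ hfix => (memLα x).1 hx τ (hN τ hfix)))
  -- if `c` fixed `Lα` pointwise, we would get a contradiction
  have hcfixed : (∀ x ∈ Lα, c x = x) → False := by
    intro hcf
    have hcstab : c ∈ stab α := by
      apply my_closure L (stab α) hN c
      intro x hx
      exact hcf x (by rw [hLα]; exact hx)
    obtain ⟨ρ0, hρ0⟩ : ΦK.Nonempty := by
      rcases Set.eq_empty_or_nonempty ΦK with hemp | hne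
      · exfalso
        have hval : (K.val.toRingHom : ↥K →+* Qbar) ∈ ΦK ∪ gact c '' ΦK := by
          rw [hΦK.2]
          exact Set.mem_univ _
        rw [hemp] at hval
        simp at hval
      · exact hne
    have hcstab0 : ∀ σ : ↥L →+* Qbar, α (gact c⁻¹ σ) = α σ := hcstab
    obtain ⟨σ, rfl⟩ := hressur ρ0
    have h1 := hcstab0 σ
    rw [hα, hα, res_gact, hcinv] at h1
    have h2 : gact c (res hKL σ) ∈ gact c '' ΦK := ⟨_, hρ0, rfl⟩
    have h3 : gact c (res hKL σ) ∉ ΦK := by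
      intro hmem
      have h4 : gact c (res hKL σ) ∈ ΦK ∩ (gact c '' ΦK) := ⟨hmem, h2⟩
      rw [hΦK.1] at h4
      exact h4
    have h5 := hα₀supp _ h3
    have h6 := hα₀pos _ hρ0
    omega
  -- conjugation by `c` preserves `stab α`
  have hconj : ∀ h ∈ stab α, c * h * c ∈ stab α := by
    intro h hh
    have hh0 : ∀ σ' : ↥L →+* Qbar, α (gact h⁻¹ σ') = α σ' := hh
    show ∀ σ : ↥L →+* Qbar, α (gact (c * h * c)⁻¹ σ) = α σ
    intro σ
    have hinv : (c * h * c)⁻¹ = c * h⁻¹ * c := by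
      simp only [mul_inv_rev, hcinv, mul_assoc]
    have hres : res hKL (gact (c * h * c)⁻¹ σ) = res hKL (gact h⁻¹ σ) := by
      rw [hinv]
      ext z
      show (c * h⁻¹ * c) (σ (incl hKL z)) = h⁻¹ (σ (incl hKL z))
      have e0 : (c * h⁻¹ * c) (σ (incl hKL z)) = c (h⁻¹ (c (σ (incl hKL z)))) := by
        simp only [AlgEquiv.mul_apply]
      rw [e0]
      have e1 : c (σ (incl hKL z)) = σ (incl hKL (cK z)) := (hcKcomm (res hKL σ) z).symm
      rw [e1]
      have e2 := hcKcomm (res hKL (gact h⁻¹ σ)) (cK z)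
      rw [hcK2 z] at e2
      exact e2.symm
    rw [hα, hres, ← hα, hh0 σ]
  have hcmemLα : ∀ x ∈ Lα, c x ∈ Lα := by
    intro x hx
    rw [memLα]
    intro h hh
    have h2 : (c * h * c) x = x := (memLα x).1 hx _ (hconj h hh)
    have h3 : c (h (c x)) = x := by
      simpa only [AlgEquiv.mul_apply] using h2
    calc h (c x) = c (c (h (c x))) := (hc2 _).symm
      _ = c x := by rw [h3]
  -- commutators `τ⁻¹ c τ c` lie in `stab α`
  have hcomm : ∀ τ : Qbar ≃ₐ[ℚ] Qbar, τ⁻¹ * c * τ * c ∈ stab α := by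
    intro τ
    show ∀ σ : ↥L →+* Qbar, α (gact (τ⁻¹ * c * τ * c)⁻¹ σ) = α σ
    intro σ
    have hinv : (τ⁻¹ * c * τ * c)⁻¹ = c * τ⁻¹ * c * τ := by
      simp only [mul_inv_rev, inv_inv, hcinv, mul_assoc]
    have hres : res hKL (gact (τ⁻¹ * c * τ * c)⁻¹ σ) = res hKL σ := by
      rw [hinv]
      ext z
      show (c * τ⁻¹ * c * τ) (σ (incl hKL z)) = σ (incl hKL z)
      have e0 : (c * τ⁻¹ * c * τ) (σ (incl hKL z)) = c (τ⁻¹ (c (τ (σ (incl hKL z))))) := by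
        simp only [AlgEquiv.mul_apply]
      rw [e0]
      have e1 : c (τ (σ (incl hKL z))) = τ (σ (incl hKL (cK z))) :=
        (hcKcomm (gact τ (res hKL σ)) z).symm
      rw [e1]
      have e15 : τ⁻¹ (τ (σ (incl hKL (cK z)))) = σ (incl hKL (cK z)) :=
        τ.symm_apply_apply _
      rw [e15]
      have e2 := hcKcomm (res hKL σ) (cK z)
      rw [hcK2 z] at e2
      exact e2.symm
    rw [hα, hres, hα]
  -- intertwining property for all automorphisms
  have hint : ∀ (τ : Qbar ≃ₐ[ℚ] Qbar) (x : Qbar), x ∈ Lα → τ (c x) = c (τ x) := by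
    intro τ x hx
    have h2 : (τ⁻¹ * c * τ * c) x = x := (memLα x).1 hx _ (hcomm τ)
    have h3 : τ⁻¹ (c (τ (c x))) = x := by
      simpa only [AlgEquiv.mul_apply] using h2
    have h4 : c (τ (c x)) = τ x := by
      have h5 := congrArg τ h3
      rwa [show τ (τ⁻¹ (c (τ (c x)))) = c (τ (c x)) from τ.apply_symm_apply _] at h5
    calc τ (c x) = c (c (τ (c x))) := (hc2 _).symm
      _ = c (τ x) := by rw [h4]
  refine ⟨hEL, hFD, ?_⟩
  refine ⟨⟨⟨fun x => ⟨c x.1, hcmemLα _ x.2⟩, fun x => ⟨c x.1, hcmemLα _ x.2⟩,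
      fun x => Subtype.ext (hc2 _), fun x => Subtype.ext (hc2 _)⟩,
      fun x y => Subtype.ext (map_mul c _ _), fun x y => Subtype.ext (map_add c _ _)⟩,
      ?_, ?_⟩
  · -- nontriviality
    intro heq
    apply hcfixed
    intro x hx
    exact congrArg Subtype.val (DFunLike.congr_fun heq (⟨x, hx⟩ : ↥Lα))
  · -- compatibility with all embeddings
    intro σ x
    obtain ⟨τ, hτ⟩ := my_exists_extension Lα σ
    calc σ (⟨c x.1, hcmemLα _ x.2⟩ : ↥Lα) = τ (c x.1) := (hτ _).symm
      _ = c (τ x.1) := hint τ x.1 x.2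
      _ = c (σ x) := by rw [hτ x]
end

section
/- Let $L \subseteq \overline{\mathbb{Q}}$ be a totally imaginary number field, $K \subseteq L$ a CM-subfield with CM-type $\Phi_K$, and $\Phi$ the lifted CM-type of $L$. Let $\alpha_0, \beta_0 : J_K \to \mathbb{Z}_{\geq 0}$ with $\alpha_0$ supported on $\Phi_K$, $\alpha_0(\sigma) \geq 1$ for $\sigma \in \Phi_K$, $\beta_0$ supported on $c\Phi_K$, and suppose there is an integer $w$ with $\beta_0(c \circ \sigma) - \alpha_0(\sigma) = w$ for all $\sigma \in \Phi_K$. Define $\alpha(\sigma) = \alpha_0(\sigma|_K)$ and $\beta(\sigma) = \beta_0(\sigma|_K)$ for $\sigma \in J_L$, and let $L^{\alpha}, L^{\beta} \subseteq \overline{\mathbb{Q}}$ be the fixed fields of the stabilizers of $\alpha$ and $\beta$ in $G_{\mathbb{Q}}$. Then $L^{\beta} \subseteq L^{\alpha}$. -/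
/-!
STATEMENT 1: Let `L ⊆ ℚ̄` be a totally imaginary number field, `K ⊆ L` a CM-subfield
with CM-type `Φ_K`, and `Φ` the lifted CM-type of `L`.  Let `α₀, β₀ : J_K → ℤ_{≥0}`
with `α₀` supported on `Φ_K`, `α₀ ≥ 1` on `Φ_K`, `β₀` supported on `cΦ_K`, and suppose
there is an integer `w` with `β₀(c ∘ σ) - α₀(σ) = w` for all `σ ∈ Φ_K`.  Define
`α(σ) = α₀(σ|_K)` and `β(σ) = β₀(σ|_K)` for `σ ∈ J_L`, and let `L^α, L^β ⊆ ℚ̄` be the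
fixed fields of the stabilizers of `α` and `β` in `G_ℚ`.  Then `L^β ⊆ L^α`.

`ℚ̄` is modelled as an algebraic closure of `ℚ` equipped with an embedding `emb` into
`ℂ`, and `c : ℚ̄ ≃ₐ[ℚ] ℚ̄` is complex conjugation restricted to `ℚ̄` (i.e. it is
compatible with conjugation on `ℂ` via `emb`).
-/

variable {Qbar : Type*} [Field Qbar] [Algebra ℚ Qbar]

theorem statement1
    (Qbar : Type*) [Field Qbar] [Algebra ℚ Qbar] [IsAlgClosure ℚ Qbar]
    -- complex conjugation on `ℚ̄`, via an embedding of `ℚ̄` into `ℂ`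
    (emb : Qbar →+* ℂ) (c : Qbar ≃ₐ[ℚ] Qbar)
    (hc : ∀ x : Qbar, emb (c x) = (starRingEnd ℂ) (emb x))
    (K L : IntermediateField ℚ Qbar) [FiniteDimensional ℚ L]
    (hKL : K ≤ L)
    (hLim : TotallyImaginary c L)
    (hK : IsCMField c K)
    (ΦK : Set (↥K →+* Qbar)) (hΦK : IsCMType c ΦK)
    (Φ : Set (↥L →+* Qbar)) (hΦ : Φ = liftType hKL ΦK)
    (α₀ β₀ : (↥K →+* Qbar) → ℤ)
    (hα₀pos : ∀ σ ∈ ΦK, 1 ≤ α₀ σ) (hα₀supp : ∀ σ ∉ ΦK, α₀ σ = 0)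
    (hβ₀nn : ∀ σ, 0 ≤ β₀ σ) (hβ₀supp : ∀ σ ∉ gact c '' ΦK, β₀ σ = 0)
    (w : ℤ) (hw : ∀ σ ∈ ΦK, β₀ (gact c σ) - α₀ σ = w)
    (α β : (↥L →+* Qbar) → ℤ)
    (hα : ∀ σ : ↥L →+* Qbar, α σ = α₀ (res hKL σ))
    (hβ : ∀ σ : ↥L →+* Qbar, β σ = β₀ (res hKL σ)) :
    IntermediateField.fixedField (stab β) ≤ IntermediateField.fixedField (stab α) := by
 -- It suffices to show `stab α ≤ stab β`.
  have hemb : Function.Injective emb := emb.injective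
  have hcc : ∀ x : Qbar, c (c x) = x := by
    intro x
    apply hemb
    rw [hc, hc, Complex.conj_conj]
  -- `gact c` is an involution on embeddings
  have hgcc : ∀ (ν : ↥K →+* Qbar), gact c (gact c ν) = ν := by
    intro ν
    ext x
    exact hcc (ν x)
  -- `gact c` commutes with `gact τ` on embeddings of the CM-field `K`
  obtain ⟨cK, -, hcK⟩ := hK
  have hcomm : ∀ (τ : Qbar ≃ₐ[ℚ] Qbar) (ν : ↥K →+* Qbar),
      gact c (gact τ ν) = gact τ (gact c ν) := by
    intro τ ν
    ext x
    have h1 : (gact τ ν) (cK x) = c ((gact τ ν) x) := hcK (gact τ ν) x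
    have h2 : ν (cK x) = c (ν x) := hcK ν x
    show c (τ (ν x)) = τ (c (ν x))
    rw [← h2]
    exact h1.symm
  -- restriction commutes with the Galois action
  have hres : ∀ (τ : Qbar ≃ₐ[ℚ] Qbar) (σ : ↥L →+* Qbar),
      res hKL (gact τ σ) = gact τ (res hKL σ) := fun τ σ => rfl
  have hrc : ∀ (σ : ↥L →+* Qbar), res hKL (gact c σ) = gact c (res hKL σ) :=
    fun σ => rfl
  -- disjointness and covering for the CM-type
  obtain ⟨hdisj, hcover⟩ := hΦK
  have hnotboth : ∀ ν : ↥K →+* Qbar, ν ∈ ΦK → ν ∉ gact c '' ΦK := by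
    intro ν h1 h2
    exact Set.eq_empty_iff_forall_notMem.mp hdisj ν ⟨h1, h2⟩
  have hor : ∀ ν : ↥K →+* Qbar, ν ∈ ΦK ∨ ν ∈ gact c '' ΦK := by
    intro ν
    have := Set.eq_univ_iff_forall.mp hcover ν
    exact this
  -- key computation of β in terms of α
  have hβcomp : ∀ σ : ↥L →+* Qbar, res hKL σ ∉ ΦK →
      β σ = α₀ (gact c (res hKL σ)) + w := by
    intro σ hσ
    rcases hor (res hKL σ) with h | h
    · exact absurd h hσ
    obtain ⟨ν, hν, hνeq⟩ := h
    have hν2 : gact c (res hKL σ) = ν := by rw [← hνeq, hgcc]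
    have := hw ν hν
    rw [hβ σ, hν2, ← hνeq]
    omega
  have hβzero : ∀ σ : ↥L →+* Qbar, res hKL σ ∈ ΦK → β σ = 0 := by
    intro σ hσ
    rw [hβ σ]
    exact hβ₀supp _ (hnotboth _ hσ)
  -- α detects membership in ΦK
  have hαdet : ∀ σ : ↥L →+* Qbar, res hKL σ ∈ ΦK ↔ 1 ≤ α σ := by
    intro σ
    rw [hα σ]
    constructor
    · exact fun h => hα₀pos _ h
    · intro h
      by_contra h2
      rw [hα₀supp _ h2] at h
      omega
  -- the main containment of stabilizers
  have hsub : stab α ≤ stab β := by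
    intro τ hτ
    have hτ' : ∀ σ : ↥L →+* Qbar, α (gact τ⁻¹ σ) = α σ := hτ
    intro σ
    show β (gact τ⁻¹ σ) = β σ
    by_cases hσ : res hKL σ ∈ ΦK
    · have h1 : res hKL (gact τ⁻¹ σ) ∈ ΦK := by
        rw [hαdet, hτ' σ, ← hαdet]
        exact hσ
      rw [hβzero _ h1, hβzero _ hσ]
    · have h1 : res hKL (gact τ⁻¹ σ) ∉ ΦK := by
        rw [hαdet, hτ' σ, ← hαdet]
        exact hσ
      rw [hβcomp _ h1, hβcomp _ hσ]
      congr 1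
      have key : gact c (res hKL (gact τ⁻¹ σ)) = res hKL (gact τ⁻¹ (gact c σ)) := by
        rw [hres, hcomm, ← hrc, ← hres]
      rw [key]
      have := hτ' (gact c σ)
      rw [hα, hα] at this
      rw [this, hrc]
  -- conclude by antitonicity of fixed fields
  intro x hx
  exact fun g => hx ⟨g.1, hsub g.2⟩
end

section
/- Let $T \subseteq F$ be number fields and let $\iota, \iota' : T \to F$ be ring homomorphisms. Regard $F$ as a module over $T \otimes_{\mathbb{Q}} F$ via $(t \otimes x)\cdot a = \iota(t)\,x\,a$, giving $F_{\iota}$, and likewise $F_{\iota'}$ via $\iota'$. Then: if $\iota = \iota'$, the multiplication map $F_{\iota} \otimes_{T \otimes_{\mathbb{Q}} F} F_{\iota'} \to F$, $a \otimes b \mapsto ab$, is an isomorphism; and if $\iota \neq \iota'$, then $F_{\iota} \otimes_{T \otimes_{\mathbb{Q}} F} F_{\iota'} = 0$. -/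
/-!
STATEMENT 8: Let `T ⊆ F` be number fields and `ι, ι' : T → F` ring homomorphisms.
Regard `F` as a module `F_ι` over `T ⊗_ℚ F` via `(t ⊗ x) • a = ι(t) x a`, and
likewise `F_{ι'}` via `ι'`.  Then: if `ι = ι'`, the multiplication map
`F_ι ⊗_{T ⊗ F} F_{ι'} → F`, `a ⊗ b ↦ a b`, is an isomorphism; if `ι ≠ ι'`, then
`F_ι ⊗_{T ⊗ F} F_{ι'} = 0`.

(The case `ι = ι'` is stated, equivalently, for an arbitrary `ι` with both factors
equal to `F_ι`.)
-/

open scoped TensorProduct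

/-- the ring homomorphism `T ⊗_ℚ F → F`, `t ⊗ x ↦ ι(t) x` -/
noncomputable def prodHom (F : Type*) [Field F] [NumberField F] (T : Subfield F)
    (ι : ↥T →+* F) : (↥T ⊗[ℚ] F) →+* F :=
  (Algebra.TensorProduct.productMap ι.toRatAlgHom (AlgHom.id ℚ F)).toRingHom

/-- `F`, regarded as a `T ⊗_ℚ F`-module via `(t ⊗ x) • a = ι(t) x a` -/
@[nolint unusedArguments]
def Fmod (F : Type*) [Field F] [NumberField F] (T : Subfield F) (ι : ↥T →+* F) :
    Type _ := F

instance (F : Type*) [Field F] [NumberField F] (T : Subfield F) (ι : ↥T →+* F) :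
    Field (Fmod F T ι) := inferInstanceAs (Field F)

noncomputable instance (F : Type*) [Field F] [NumberField F] (T : Subfield F)
    (ι : ↥T →+* F) : Module (↥T ⊗[ℚ] F) (Fmod F T ι) :=
  Module.compHom F (prodHom F T ι)



/-- the identity map `F_ι → F` -/
def unF (F : Type*) [Field F] [NumberField F] (T : Subfield F) (ι : ↥T →+* F)
    (a : Fmod F T ι) : F := a

/-- the multiplication map `F_ι ⊗_{T ⊗ F} F_ι → F_ι`, `a ⊗ b ↦ a b` -/
noncomputable def mulMap (F : Type*) [Field F] [NumberField F] (T : Subfield F)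
    (ι : ↥T →+* F) :
    (Fmod F T ι ⊗[↥T ⊗[ℚ] F] Fmod F T ι) →ₗ[↥T ⊗[ℚ] F] Fmod F T ι :=
  TensorProduct.lift <|
    LinearMap.mk₂ (↥T ⊗[ℚ] F) (fun a b => (a * b : Fmod F T ι))
      (fun a a' b => add_mul a a' b)
      (fun r a b => mul_assoc (prodHom F T ι r) (unF F T ι a) (unF F T ι b))
      (fun a b b' => mul_add a b b')
      (fun r a b => mul_left_comm (unF F T ι a) (prodHom F T ι r) (unF F T ι b))


set_option synthInstance.maxHeartbeats 1000000
set_option maxHeartbeats 2000000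

section Aux
variable (F : Type*) [Field F] [NumberField F] (T : Subfield F)

/-- the identity map `F → F_ι` -/
def ofF (ι : ↥T →+* F) (a : F) : Fmod F T ι := a

lemma prodHom_tmul (ι : ↥T →+* F) (t : ↥T) (x : F) :
    prodHom F T ι (t ⊗ₜ[ℚ] x) = ι t * x := by
  simp only [prodHom, AlgHom.toRingHom_eq_coe, RingHom.coe_coe,
    Algebra.TensorProduct.productMap_apply_tmul, AlgHom.coe_id, id_eq]
  rfl

lemma smul_eq (ι : ↥T →+* F) (r : ↥T ⊗[ℚ] F) (x : Fmod F T ι) :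
    r • x = ofF F T ι (prodHom F T ι r * unF F T ι x) := rfl

lemma one_tmul_smul (ι : ↥T →+* F) (y : F) (b : Fmod F T ι) :
    (((1 : ↥T) ⊗ₜ[ℚ] y : ↥T ⊗[ℚ] F)) • b = ofF F T ι (y * unF F T ι b) := by
  rw [smul_eq, prodHom_tmul, map_one, one_mul]

lemma tmul_eq (ι ι' : ↥T →+* F) (a : Fmod F T ι) (b : Fmod F T ι') :
    a ⊗ₜ[↥T ⊗[ℚ] F] b =
      (1 : Fmod F T ι) ⊗ₜ[↥T ⊗[ℚ] F] ofF F T ι' (unF F T ι a * unF F T ι' b) := by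
  have h1 : (((1 : ↥T) ⊗ₜ[ℚ] (unF F T ι a) : ↥T ⊗[ℚ] F)) • (1 : Fmod F T ι) = a := by
    rw [one_tmul_smul]
    show ofF F T ι (unF F T ι a * 1) = a
    rw [mul_one]
    rfl
  calc a ⊗ₜ[↥T ⊗[ℚ] F] b
      = ((((1 : ↥T) ⊗ₜ[ℚ] (unF F T ι a) : ↥T ⊗[ℚ] F)) • (1 : Fmod F T ι))
          ⊗ₜ[↥T ⊗[ℚ] F] b := by rw [h1]
    _ = (1 : Fmod F T ι) ⊗ₜ[↥T ⊗[ℚ] F]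
          ((((1 : ↥T) ⊗ₜ[ℚ] (unF F T ι a) : ↥T ⊗[ℚ] F)) • b) :=
        TensorProduct.smul_tmul _ _ _
    _ = _ := by rw [one_tmul_smul]

end Aux

set_option synthInstance.maxHeartbeats 1000000 in
set_option maxHeartbeats 2000000 in
theorem statement8 (F : Type*) [Field F] [NumberField F] (T : Subfield F)
    (ι ι' : ↥T →+* F) :
    -- if the two structures agree, multiplication is an isomorphism
    Function.Bijective (mulMap F T ι) ∧
    -- if `ι ≠ ι'`, the tensor product vanishes
    (ι ≠ ι' → ∀ z : Fmod F T ι ⊗[↥T ⊗[ℚ] F] Fmod F T ι', z = 0) := by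
  have R := ↥T ⊗[ℚ] F
  constructor
  · constructor
    · intro z w h
      have key : ∀ z : Fmod F T ι ⊗[↥T ⊗[ℚ] F] Fmod F T ι,
          (1 : Fmod F T ι) ⊗ₜ[↥T ⊗[ℚ] F] (mulMap F T ι z) = z := by
        intro z
        induction z using TensorProduct.induction_on with
        | zero => simp
        | tmul a b => exact (tmul_eq F T ι ι a b).symm
        | add x y hx hy => rw [map_add, TensorProduct.tmul_add, hx, hy]
      rw [← key z, ← key w, h]
    · intro c
      exact ⟨(1 : Fmod F T ι) ⊗ₜ c, one_mul c⟩
  · intro hne z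
    obtain ⟨t, ht⟩ : ∃ t : ↥T, ι t ≠ ι' t := by
      by_contra h
      push_neg at h
      exact hne (RingHom.ext h)
    set c : F := ι t - ι' t with hc
    have hc0 : c ≠ 0 := sub_ne_zero.mpr ht
    set r : ↥T ⊗[ℚ] F := t ⊗ₜ[ℚ] (1 : F) with hr
    have e1 : r • ((1 : Fmod F T ι) ⊗ₜ[↥T ⊗[ℚ] F] (1 : Fmod F T ι'))
        = (ofF F T ι (ι t)) ⊗ₜ[↥T ⊗[ℚ] F] (1 : Fmod F T ι') := by
      rw [TensorProduct.smul_tmul']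
      congr 1
      rw [smul_eq, prodHom_tmul]
      show ofF F T ι (ι t * 1 * 1) = ofF F T ι (ι t)
      rw [mul_one, mul_one]
    have e2 : r • ((1 : Fmod F T ι) ⊗ₜ[↥T ⊗[ℚ] F] (1 : Fmod F T ι'))
        = (1 : Fmod F T ι) ⊗ₜ[↥T ⊗[ℚ] F] (ofF F T ι' (ι' t)) := by
      rw [TensorProduct.smul_tmul', TensorProduct.smul_tmul]
      congr 1
      rw [smul_eq, prodHom_tmul]
      show ofF F T ι' (ι' t * 1 * 1) = ofF F T ι' (ι' t)
      rw [mul_one, mul_one]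
    have e3 : (ofF F T ι (ι t)) ⊗ₜ[↥T ⊗[ℚ] F] (1 : Fmod F T ι')
        = (1 : Fmod F T ι) ⊗ₜ[↥T ⊗[ℚ] F] (ofF F T ι' (ι t)) := by
      rw [tmul_eq F T ι ι']
      congr 1
      show ofF F T ι' (ι t * 1) = ofF F T ι' (ι t)
      rw [mul_one]
    have key : (1 : Fmod F T ι) ⊗ₜ[↥T ⊗[ℚ] F] (ofF F T ι' c) = 0 := by
      have h4 : (1 : Fmod F T ι) ⊗ₜ[↥T ⊗[ℚ] F] (ofF F T ι' (ι t))
          = (1 : Fmod F T ι) ⊗ₜ[↥T ⊗[ℚ] F] (ofF F T ι' (ι' t)) := by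
        rw [← e3, ← e1, e2]
      have h5 : ofF F T ι' c = ofF F T ι' (ι t) - ofF F T ι' (ι' t) := rfl
      rw [h5, TensorProduct.tmul_sub, h4, sub_self]
    have key2 : ∀ x : Fmod F T ι', (1 : Fmod F T ι) ⊗ₜ[↥T ⊗[ℚ] F] x = 0 := by
      intro x
      have hmul : unF F T ι' x * c⁻¹ * c = unF F T ι' x := by field_simp
      have hx : x = (((1 : ↥T) ⊗ₜ[ℚ] (unF F T ι' x * c⁻¹) : ↥T ⊗[ℚ] F))
          • (ofF F T ι' c) := by
        rw [one_tmul_smul]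
        show x = ofF F T ι' (unF F T ι' x * c⁻¹ * c)
        rw [hmul]
        rfl
      rw [hx, TensorProduct.tmul_smul, key, smul_zero]
    induction z using TensorProduct.induction_on with
    | zero => rfl
    | tmul a b => rw [tmul_eq F T ι ι' a b]; exact key2 _
    | add x y hx hy => rw [hx, hy, add_zero]
end

section
/- Let $L$ be a totally imaginary number field with ring of integers $O_L$, let $\mathfrak{f} \subsetneq O_L$ be a nonzero proper ideal, and let $\mathfrak{b} \subseteq O_L$ be a nonzero ideal with $\mathfrak{f} + \mathfrak{b} = O_L$. Set $O_{\mathfrak{f}}^{\times} = \{u \in O_L^{\times} : u - 1 \in \mathfrak{f}\}$ and $1 + \mathfrak{f}\mathfrak{b}^{-1} = \{1 + f : f \in \mathfrak{f}\mathfrak{b}^{-1}\} \subseteq L$, where $\mathfrak{f}\mathfrak{b}^{-1}$ is the product of fractional ideals. Then: every element of $1 + \mathfrak{f}\mathfrak{b}^{-1}$ is nonzero; $O_{\mathfrak{f}}^{\times}$ maps $1 + \mathfrak{f}\mathfrak{b}^{-1}$ to itself by multiplication; and the map $y \mapsto y\mathfrak{b}$ induces a bijection from the orbit set $O_{\mathfrak{f}}^{\times}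 \backslash (1 + \mathfrak{f}\mathfrak{b}^{-1})$ onto the set of nonzero integral ideals $\mathfrak{a} \subseteq O_L$ such that $\mathfrak{a} = \gamma\mathfrak{b}$ (as fractional ideals) for some $\gamma \in L^{\times}$ with $v_{\mathfrak{p}}(\gamma - 1) \geq v_{\mathfrak{p}}(\mathfrak{f})$ for every maximal ideal $\mathfrak{p} \supseteq \mathfrak{f}$. -/
/-!
STATEMENT 10: Let `L` be a totally imaginary number field, `𝔣 ⊊ O_L` a nonzero proper
ideal and `𝔟 ⊆ O_L` a nonzero ideal coprime to `𝔣`.  Let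
`O_𝔣^× = {u ∈ O_L^× : u - 1 ∈ 𝔣}` and `1 + 𝔣𝔟⁻¹ ⊆ L` (product of fractional ideals).
Then every element of `1 + 𝔣𝔟⁻¹` is nonzero, `O_𝔣^×` maps `1 + 𝔣𝔟⁻¹` to itself by
multiplication, and `y ↦ y𝔟` induces a bijection from `O_𝔣^× \ (1 + 𝔣𝔟⁻¹)` onto the
set of nonzero integral ideals `𝔞` with `𝔞 = γ𝔟` for some `γ ∈ L^×` with
`v_𝔭(γ - 1) ≥ v_𝔭(𝔣)` for all maximal ideals `𝔭 ⊇ 𝔣`.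
-/

open NumberField IsDedekindDomain
open scoped Multiplicative nonZeroDivisors

/-- `γ ≡ 1 (mod* 𝔣)`: for every height-one prime `v` with `𝔣 ⊆ v` one has
`v(γ - 1) ≥ v(𝔣)`, i.e. `v(γ - 1) ≥ n` whenever `v^n ∣ 𝔣`. -/
def CongruentOneMod {L : Type*} [Field L] [NumberField L]
    (𝔣 : Ideal (𝓞 L)) (γ : L) : Prop :=
  ∀ v : HeightOneSpectrum (𝓞 L), 𝔣 ≤ v.asIdeal →
    ∀ n : ℕ, v.asIdeal ^ n ∣ 𝔣 →
      v.valuation L (γ - 1) ≤ ((Multiplicative.ofAdd (-(n : ℤ)) : Multiplicative ℤ) : WithZero (Multiplicative ℤ))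

theorem aux_dvd_of_pows {R : Type*} [CommRing R] [IsDedekindDomain R]
    (I J : Ideal R) (hI : I ≠ ⊥)
    (h : ∀ v : HeightOneSpectrum R, ∀ n : ℕ, v.asIdeal ^ n ∣ I → v.asIdeal ^ n ∣ J) :
    I ∣ J := by
  classical
  by_cases hJ : J = ⊥
  · rw [hJ, ← Ideal.zero_eq_bot]; exact dvd_zero I
  rw [← Ideal.zero_eq_bot] at hI hJ
  rw [UniqueFactorizationMonoid.dvd_iff_normalizedFactors_le_normalizedFactors hI hJ,
    Multiset.le_iff_count]
  intro p
  by_cases hp : p ∈ UniqueFactorizationMonoid.normalizedFactors I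
  · have hprime : Prime p := UniqueFactorizationMonoid.prime_of_normalized_factor p hp
    have hirr := hprime.irreducible
    set n := Multiset.count p (UniqueFactorizationMonoid.normalizedFactors I) with hn
    have h1 : p ^ n ∣ I := by
      rw [pow_dvd_iff_le_emultiplicity,
        UniqueFactorizationMonoid.le_emultiplicity_iff_replicate_le_normalizedFactors hirr hI,
        normalize_eq]
      exact Multiset.le_count_iff_replicate_le.mp le_rfl
    have h2 := h ⟨p, Ideal.isPrime_of_prime hprime, by
      simpa [Ideal.zero_eq_bot] using hprime.ne_zero⟩ n h1
    rw [pow_dvd_iff_le_emultiplicity,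
      UniqueFactorizationMonoid.le_emultiplicity_iff_replicate_le_normalizedFactors hirr hJ,
      normalize_eq] at h2
    exact Multiset.le_count_iff_replicate_le.mpr h2
  · simp [Multiset.count_eq_zero_of_notMem hp]

section

variable {R K : Type*} [CommRing R] [IsDedekindDomain R] [Field K] [Algebra R K]
  [IsFractionRing R K]

theorem aux_val_le (𝔣 𝔟 : Ideal R) (h𝔟0 : 𝔟 ≠ ⊥) (x : K)
    (hx : x ∈ (𝔣 : FractionalIdeal R⁰ K) * (𝔟 : FractionalIdeal R⁰ K)⁻¹)
    (v : HeightOneSpectrum R) (hv𝔟 : ¬ 𝔟 ≤ v.asIdeal) (n : ℕ)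
    (hn : v.asIdeal ^ n ∣ 𝔣) :
    v.valuation K x ≤ ((Multiplicative.ofAdd (-(n : ℤ)) : Multiplicative ℤ) : WithZero (Multiplicative ℤ)) := by
  obtain ⟨b, hb𝔟, hbv⟩ := SetLike.not_le_iff_exists.mp hv𝔟
  have h𝔟ne : (𝔟 : FractionalIdeal R⁰ K) ≠ 0 := by rwa [FractionalIdeal.coeIdeal_ne_zero]
  have hbmem : algebraMap R K b ∈ (𝔟 : FractionalIdeal R⁰ K) :=
    FractionalIdeal.mem_coeIdeal_of_mem R⁰ hb𝔟
  have hprod : x * algebraMap R K b ∈ (𝔣 : FractionalIdeal R⁰ K) := by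
    have := FractionalIdeal.mul_mem_mul hx hbmem
    rwa [mul_assoc, inv_mul_cancel₀ h𝔟ne, mul_one] at this
  obtain ⟨c, hc𝔣, hc⟩ := (FractionalIdeal.mem_coeIdeal _).mp hprod
  have hcv : v.intValuationDef c ≤ (Multiplicative.ofAdd (-(n : ℤ)) : Multiplicative ℤ) :=
    (v.intValuation_le_pow_iff_dvd c n).mpr
      (dvd_trans hn (Ideal.dvd_span_singleton.mpr hc𝔣))
  have hbv1 : v.intValuationDef b = 1 := by
    refine le_antisymm (v.intValuation_le_one b) ?_
    by_contra hlt
    push_neg at hlt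
    exact hbv ((Ideal.span_singleton_le_iff_mem _).mp
      (Ideal.dvd_iff_le.mp ((v.intValuation_lt_one_iff_dvd b).mp hlt)))
  have hmul : v.valuation K x * v.valuation K (algebraMap R K b) = v.valuation K (algebraMap R K c) := by
    rw [← Valuation.map_mul, hc]
  rw [v.valuation_of_algebraMap, v.valuation_of_algebraMap, HeightOneSpectrum.intValuation_apply,
    HeightOneSpectrum.intValuation_apply, hbv1, mul_one] at hmul
  rw [hmul]
  exact hcv

theorem aux_mem_of_val (𝔣 𝔟 : Ideal R) (h𝔣0 : 𝔣 ≠ ⊥) (h𝔟0 : 𝔟 ≠ ⊥) (x : K)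
    (hval : ∀ v : HeightOneSpectrum R, 𝔣 ≤ v.asIdeal → ∀ n : ℕ, v.asIdeal ^ n ∣ 𝔣 →
      v.valuation K x ≤ ((Multiplicative.ofAdd (-(n : ℤ)) : Multiplicative ℤ) : WithZero (Multiplicative ℤ)))
    (hint : FractionalIdeal.spanSingleton R⁰ x * (𝔟 : FractionalIdeal R⁰ K) ≤ 1) :
    x ∈ (𝔣 : FractionalIdeal R⁰ K) * (𝔟 : FractionalIdeal R⁰ K)⁻¹ := by
  have h𝔟ne : (𝔟 : FractionalIdeal R⁰ K) ≠ 0 := by rwa [FractionalIdeal.coeIdeal_ne_zero]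
  obtain ⟨J, hJ⟩ := FractionalIdeal.le_one_iff_exists_coeIdeal.mp hint
  have hdvd : 𝔣 ∣ J := by
    apply aux_dvd_of_pows _ _ h𝔣0
    intro v n hn
    rcases Nat.eq_zero_or_pos n with rfl | hnpos
    · simpa using one_dvd _
    have hfv : 𝔣 ≤ v.asIdeal :=
      Ideal.le_of_dvd (dvd_trans (dvd_pow_self v.asIdeal hnpos.ne') hn)
    rw [Ideal.dvd_iff_le]
    intro z hz
    have hz1 : algebraMap R K z ∈ FractionalIdeal.spanSingleton R⁰ x *
        (𝔟 : FractionalIdeal R⁰ K) := by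
      rw [← hJ]; exact FractionalIdeal.mem_coeIdeal_of_mem _ hz
    have hz' : algebraMap R K z ∈ FractionalIdeal.spanSingleton R⁰ x := by
      have hle : FractionalIdeal.spanSingleton R⁰ x * (𝔟 : FractionalIdeal R⁰ K) ≤
          FractionalIdeal.spanSingleton R⁰ x := by
        calc FractionalIdeal.spanSingleton R⁰ x * (𝔟 : FractionalIdeal R⁰ K)
            ≤ FractionalIdeal.spanSingleton R⁰ x * 1 :=
              mul_le_mul_right FractionalIdeal.coeIdeal_le_one _
          _ = FractionalIdeal.spanSingleton R⁰ x := mul_one _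
      exact hle hz1
    obtain ⟨c, hc⟩ := (FractionalIdeal.mem_spanSingleton _).mp hz'
    have hvz : v.valuation K (algebraMap R K z) ≤
        ((Multiplicative.ofAdd (-(n : ℤ)) : Multiplicative ℤ) : WithZero (Multiplicative ℤ)) := by
      rw [← hc, Algebra.smul_def, Valuation.map_mul, v.valuation_of_algebraMap]
      calc v.intValuation c * v.valuation K x ≤ 1 * v.valuation K x :=
            mul_le_mul_left (v.intValuation_le_one c) _
        _ = v.valuation K x := one_mul _
        _ ≤ _ := hval v hfv n hn
    rw [v.valuation_of_algebraMap, HeightOneSpectrum.intValuation_apply] at hvz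
    exact (Ideal.span_singleton_le_iff_mem _).mp
      (Ideal.dvd_iff_le.mp ((v.intValuation_le_pow_iff_dvd z n).mp hvz))
  have hle : FractionalIdeal.spanSingleton R⁰ x * (𝔟 : FractionalIdeal R⁰ K) ≤
      (𝔣 : FractionalIdeal R⁰ K) := by
    rw [← hJ]
    exact (FractionalIdeal.coeIdeal_le_coeIdeal K).mpr (Ideal.le_of_dvd hdvd)
  have hfin : FractionalIdeal.spanSingleton R⁰ x ≤
      (𝔣 : FractionalIdeal R⁰ K) * (𝔟 : FractionalIdeal R⁰ K)⁻¹ := by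
    have h2 : FractionalIdeal.spanSingleton R⁰ x * (𝔟 : FractionalIdeal R⁰ K) *
        (𝔟 : FractionalIdeal R⁰ K)⁻¹ ≤ (𝔣 : FractionalIdeal R⁰ K) *
        (𝔟 : FractionalIdeal R⁰ K)⁻¹ :=
      mul_le_mul_left hle (𝔟 : FractionalIdeal R⁰ K)⁻¹
    rwa [mul_assoc, mul_inv_cancel₀ h𝔟ne, mul_one] at h2
  exact FractionalIdeal.spanSingleton_le_iff_mem.mp hfin

end

theorem statement10 (L : Type*) [Field L] [NumberField L]
    -- `L` is totally imaginary
    (hLim : ∀ σ : L →+* ℂ, ∃ x : L, (σ x).im ≠ 0)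
    (𝔣 : Ideal (𝓞 L)) (h𝔣0 : 𝔣 ≠ ⊥) (h𝔣proper : 𝔣 ≠ ⊤)
    (𝔟 : Ideal (𝓞 L)) (h𝔟0 : 𝔟 ≠ ⊥) (hcop : 𝔣 ⊔ 𝔟 = ⊤)
    -- `S` is the set `1 + 𝔣𝔟⁻¹ ⊆ L`
    (S : Set L)
    (hS : S = {y : L | ∃ f ∈ ((𝔣 : FractionalIdeal (𝓞 L)⁰ L) * (𝔟 : FractionalIdeal (𝓞 L)⁰ L)⁻¹),
      y = 1 + f})
    -- the orbit equivalence `y ∼ u y` for `u ∈ O_𝔣^×`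
    (r : S → S → Prop)
    (hr : ∀ y z : S, r y z ↔ ∃ u : (𝓞 L)ˣ, (u : 𝓞 L) - 1 ∈ 𝔣 ∧
      (z : L) = (((u : 𝓞 L) : L)) * (y : L)) :
    -- (i) every element of `1 + 𝔣𝔟⁻¹` is nonzero
    (∀ y ∈ S, y ≠ (0 : L)) ∧
    -- (ii) `O_𝔣^×` maps `1 + 𝔣𝔟⁻¹` to itself by multiplication
    (∀ u : (𝓞 L)ˣ, (u : 𝓞 L) - 1 ∈ 𝔣 → ∀ y ∈ S, (((u : 𝓞 L) : L)) * y ∈ S) ∧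
    -- (iii) `y ↦ y𝔟` induces a bijection from `O_𝔣^× \ (1 + 𝔣𝔟⁻¹)` onto the set of
    -- nonzero integral ideals `𝔞 = γ𝔟` with `γ ≡ 1 (mod* 𝔣)`
    (∃ b : Quot r ≃ {𝔞 : Ideal (𝓞 L) // 𝔞 ≠ ⊥ ∧ ∃ γ : L, γ ≠ 0 ∧
        (𝔞 : FractionalIdeal (𝓞 L)⁰ L) =
          FractionalIdeal.spanSingleton (𝓞 L)⁰ γ * (𝔟 : FractionalIdeal (𝓞 L)⁰ L) ∧
        CongruentOneMod 𝔣 γ},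
      ∀ y : S, (((b (Quot.mk r y) : Ideal (𝓞 L))) : FractionalIdeal (𝓞 L)⁰ L) =
        FractionalIdeal.spanSingleton (𝓞 L)⁰ (y : L) * (𝔟 : FractionalIdeal (𝓞 L)⁰ L)) := by
  classical
  set I : FractionalIdeal (𝓞 L)⁰ L :=
    (𝔣 : FractionalIdeal (𝓞 L)⁰ L) * (𝔟 : FractionalIdeal (𝓞 L)⁰ L)⁻¹ with hI
  have hS' : ∀ y : L, y ∈ S ↔ ∃ f ∈ I, y = 1 + f := by
    intro y; rw [hS]; exact Iff.rfl
  have h𝔟ne : (𝔟 : FractionalIdeal (𝓞 L)⁰ L) ≠ 0 := by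
    rwa [FractionalIdeal.coeIdeal_ne_zero]
  have hIb : I * (𝔟 : FractionalIdeal (𝓞 L)⁰ L) = (𝔣 : FractionalIdeal (𝓞 L)⁰ L) := by
    rw [hI, mul_assoc, inv_mul_cancel₀ h𝔟ne, mul_one]
  have hnotle : ∀ v : HeightOneSpectrum (𝓞 L), 𝔣 ≤ v.asIdeal → ¬ 𝔟 ≤ v.asIdeal := by
    intro v hfv hbv
    exact v.isPrime.ne_top (top_le_iff.mp (hcop ▸ sup_le hfv hbv))
  -- (i)
  have hi : ∀ y ∈ S, y ≠ (0 : L) := by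
    intro y hy h0
    obtain ⟨f, hf, hyf⟩ := (hS' y).mp hy
    have hfm1 : f = -1 := by linear_combination h0 - hyf
    have hone : (1 : L) ∈ I := by
      have h1 : f ∈ (I : Submodule (𝓞 L) L) := hf
      have h2 := Submodule.smul_mem (I : Submodule (𝓞 L) L) (-1 : 𝓞 L) h1
      have h3 : (-1 : 𝓞 L) • f = (1 : L) := by
        rw [hfm1, Algebra.smul_def, map_neg, map_one]; ring
      rwa [h3] at h2
    have hle1 : (1 : FractionalIdeal (𝓞 L)⁰ L) ≤ I := by
      rw [← FractionalIdeal.spanSingleton_one (S := (𝓞 L)⁰) (P := L)]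
      exact FractionalIdeal.spanSingleton_le_iff_mem.mpr hone
    have hble : (𝔟 : FractionalIdeal (𝓞 L)⁰ L) ≤ (𝔣 : FractionalIdeal (𝓞 L)⁰ L) := by
      calc (𝔟 : FractionalIdeal (𝓞 L)⁰ L) = 1 * (𝔟 : FractionalIdeal (𝓞 L)⁰ L) := (one_mul _).symm
        _ ≤ I * (𝔟 : FractionalIdeal (𝓞 L)⁰ L) := mul_le_mul_left hle1 _
        _ = (𝔣 : FractionalIdeal (𝓞 L)⁰ L) := hIb
    have : 𝔟 ≤ 𝔣 := (FractionalIdeal.coeIdeal_le_coeIdeal L).mp hble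
    exact h𝔣proper (by rw [← hcop, sup_eq_left.mpr this])
  -- 1 ≤ 𝔟⁻¹ and 𝔣 ≤ I
  have h1binv : (1 : FractionalIdeal (𝓞 L)⁰ L) ≤ (𝔟 : FractionalIdeal (𝓞 L)⁰ L)⁻¹ := by
    have := mul_le_mul_left
      (FractionalIdeal.coeIdeal_le_one (I := 𝔟) (S := (𝓞 L)⁰) (P := L)) (𝔟 : FractionalIdeal (𝓞 L)⁰ L)⁻¹
    simpa [mul_inv_cancel₀ h𝔟ne] using this
  have hfleI : (𝔣 : FractionalIdeal (𝓞 L)⁰ L) ≤ I := by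
    have := mul_le_mul_right h1binv (𝔣 : FractionalIdeal (𝓞 L)⁰ L)
    simpa using this
  -- (ii)
  have hii : ∀ u : (𝓞 L)ˣ, (u : 𝓞 L) - 1 ∈ 𝔣 → ∀ y ∈ S, (((u : 𝓞 L) : L)) * y ∈ S := by
    intro u hu y hy
    obtain ⟨f, hf, hyf⟩ := (hS' y).mp hy
    refine (hS' _).mpr ⟨algebraMap (𝓞 L) L ((u : 𝓞 L) - 1) + (u : 𝓞 L) • f, ?_, ?_⟩
    · have h1 : algebraMap (𝓞 L) L ((u : 𝓞 L) - 1) ∈ I :=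
        hfleI (FractionalIdeal.mem_coeIdeal_of_mem (𝓞 L)⁰ hu)
      have h2 : (u : 𝓞 L) • f ∈ (I : Submodule (𝓞 L) L) :=
        Submodule.smul_mem _ _ hf
      exact Submodule.add_mem (I : Submodule (𝓞 L) L) h1 h2
    · rw [hyf, Algebra.smul_def, map_sub, map_one, RingOfIntegers.coe_eq_algebraMap]
      ring
  -- congruence for elements of S
  have hcong : ∀ y : L, y ∈ S → CongruentOneMod 𝔣 y := by
    intro y hy v hfv n hn
    obtain ⟨f, hf, hyf⟩ := (hS' y).mp hy
    have : y - 1 = f := by rw [hyf]; ring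
    rw [this]
    exact aux_val_le 𝔣 𝔟 h𝔟0 f hf v (hnotle v hfv) n hn
  -- integrality
  have hint : ∀ y : L, y ∈ S →
      FractionalIdeal.spanSingleton (𝓞 L)⁰ y * (𝔟 : FractionalIdeal (𝓞 L)⁰ L) ≤ 1 := by
    intro y hy
    obtain ⟨f, hf, hyf⟩ := (hS' y).mp hy
    have hmem : y ∈ (1 : FractionalIdeal (𝓞 L)⁰ L) + I := by
      have h1 : (1 : L) ∈ ((1 : FractionalIdeal (𝓞 L)⁰ L) : Submodule (𝓞 L) L) :=
        FractionalIdeal.one_mem_one _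
      have h2 : f ∈ (I : Submodule (𝓞 L) L) := hf
      have := Submodule.add_mem_sup h1 h2
      rw [← Submodule.add_eq_sup, ← FractionalIdeal.coe_add] at this
      rw [hyf]
      exact this
    calc FractionalIdeal.spanSingleton (𝓞 L)⁰ y * (𝔟 : FractionalIdeal (𝓞 L)⁰ L)
        ≤ ((1 : FractionalIdeal (𝓞 L)⁰ L) + I) * (𝔟 : FractionalIdeal (𝓞 L)⁰ L) :=
          mul_le_mul_left
            (FractionalIdeal.spanSingleton_le_iff_mem.mpr hmem) _
      _ = (𝔟 : FractionalIdeal (𝓞 L)⁰ L) + (𝔣 : FractionalIdeal (𝓞 L)⁰ L) := by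
          rw [add_mul, one_mul, hIb]
      _ = ((𝔟 ⊔ 𝔣 : Ideal (𝓞 L)) : FractionalIdeal (𝓞 L)⁰ L) :=
          (FractionalIdeal.coeIdeal_sup _ _).symm
      _ = 1 := by rw [sup_comm, hcop, FractionalIdeal.coeIdeal_top]
  -- the ideal attached to `y ∈ S`
  have hex : ∀ y : ↥S, ∃ 𝔞 : Ideal (𝓞 L),
      (𝔞 : FractionalIdeal (𝓞 L)⁰ L) =
        FractionalIdeal.spanSingleton (𝓞 L)⁰ (y : L) * (𝔟 : FractionalIdeal (𝓞 L)⁰ L) :=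
    fun y => FractionalIdeal.le_one_iff_exists_coeIdeal.mp (hint _ y.2)
  choose A hA using hex
  have hAne : ∀ y : ↥S, A y ≠ ⊥ := by
    intro y h
    have := hA y
    rw [h, FractionalIdeal.coeIdeal_bot] at this
    exact mul_ne_zero (FractionalIdeal.spanSingleton_ne_zero_iff.mpr (hi _ y.2)) h𝔟ne this.symm
  -- the map to the target
  set T := {𝔞 : Ideal (𝓞 L) // 𝔞 ≠ ⊥ ∧ ∃ γ : L, γ ≠ 0 ∧
      (𝔞 : FractionalIdeal (𝓞 L)⁰ L) =
        FractionalIdeal.spanSingleton (𝓞 L)⁰ γ * (𝔟 : FractionalIdeal (𝓞 L)⁰ L) ∧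
      CongruentOneMod 𝔣 γ} with hT
  set F : ↥S → T := fun y => ⟨A y, hAne y, (y : L), hi _ y.2, hA y, hcong _ y.2⟩ with hF
  have hFr : ∀ y z : ↥S, r y z → F y = F z := by
    intro y z hryz
    obtain ⟨u, hu, hz⟩ := (hr y z).mp hryz
    apply Subtype.ext
    show A y = A z
    apply FractionalIdeal.coeIdeal_injective (K := L)
    show ((A y : Ideal (𝓞 L)) : FractionalIdeal (𝓞 L)⁰ L) =
      ((A z : Ideal (𝓞 L)) : FractionalIdeal (𝓞 L)⁰ L)
    have hu1 : FractionalIdeal.spanSingleton (𝓞 L)⁰ (((u : 𝓞 L) : L)) = 1 := by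
      rw [RingOfIntegers.coe_eq_algebraMap, ← FractionalIdeal.coeIdeal_span_singleton,
        Ideal.span_singleton_eq_top.mpr u.isUnit, FractionalIdeal.coeIdeal_top]
    rw [hA y, hA z, hz, ← FractionalIdeal.spanSingleton_mul_spanSingleton, hu1, one_mul]
  set g : Quot r → T := Quot.lift F hFr with hg
  haveI : NoZeroSMulDivisors (𝓞 L) L :=
    ⟨fun {c x} h => by
      rw [Algebra.smul_def, mul_eq_zero] at h
      exact h.imp_left (fun h => (map_eq_zero_iff _ (IsFractionRing.injective (𝓞 L) L)).mp h)⟩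
  have hginj : Function.Injective g := by
    intro q1 q2 h
    induction q1 using Quot.ind with | _ y => ?_
    induction q2 using Quot.ind with | _ z => ?_
    have h' : F y = F z := h
    have hAyz : A y = A z := congrArg Subtype.val h'
    have hspan : FractionalIdeal.spanSingleton (𝓞 L)⁰ (y : L) =
        FractionalIdeal.spanSingleton (𝓞 L)⁰ (z : L) := by
      have := (hA y).symm.trans ((congrArg _ hAyz).trans (hA z))
      exact mul_right_cancel₀ h𝔟ne this
    obtain ⟨u, huz⟩ := FractionalIdeal.spanSingleton_eq_spanSingleton.mp hspan
    have hzval : (z : L) = ((u : 𝓞 L) : L) * (y : L) := by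
      rw [← huz, Units.smul_def, Algebra.smul_def, RingOfIntegers.coe_eq_algebraMap]
    -- show `u - 1 ∈ 𝔣`
    have hu𝔣 : (u : 𝓞 L) - 1 ∈ 𝔣 := by
      rw [← Ideal.dvd_span_singleton]
      apply aux_dvd_of_pows _ _ h𝔣0
      intro v n hn
      rcases Nat.eq_zero_or_pos n with rfl | hnpos
      · simpa using one_dvd _
      have hfv : 𝔣 ≤ v.asIdeal :=
        Ideal.le_of_dvd (dvd_trans (dvd_pow_self v.asIdeal hnpos.ne') hn)
      have hofadd : ((Multiplicative.ofAdd (-(n : ℤ)) : Multiplicative ℤ) : WithZero (Multiplicative ℤ)) < 1 := by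
        rw [← WithZero.coe_one, WithZero.coe_lt_coe, ← ofAdd_zero, Multiplicative.ofAdd_lt]
        omega
      have hy1 : v.valuation L ((y : L) - 1) ≤
          ((Multiplicative.ofAdd (-(n : ℤ)) : Multiplicative ℤ) : WithZero (Multiplicative ℤ)) :=
        hcong _ y.2 v hfv n hn
      have hz1 : v.valuation L ((z : L) - 1) ≤
          ((Multiplicative.ofAdd (-(n : ℤ)) : Multiplicative ℤ) : WithZero (Multiplicative ℤ)) :=
        hcong _ z.2 v hfv n hn
      have hvy : v.valuation L (y : L) = 1 := by
        have h1 : v.valuation L ((1 : L) + ((y : L) - 1)) = v.valuation L (1 : L) :=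
          Valuation.map_add_eq_of_lt_left _
            (lt_of_le_of_lt hy1 (by rwa [Valuation.map_one]))
        have h2 : (1 : L) + ((y : L) - 1) = (y : L) := by ring
        rw [h2, Valuation.map_one] at h1
        exact h1
      have hsub : v.valuation L ((z : L) - (y : L)) ≤
          ((Multiplicative.ofAdd (-(n : ℤ)) : Multiplicative ℤ) : WithZero (Multiplicative ℤ)) := by
        have h3 : (z : L) - (y : L) = ((z : L) - 1) - ((y : L) - 1) := by ring
        rw [h3]
        exact le_trans (Valuation.map_sub _ _ _) (max_le hz1 hy1)
      have hkey : algebraMap (𝓞 L) L ((u : 𝓞 L) - 1) * (y : L) = (z : L) - (y : L) := by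
        rw [map_sub, map_one, hzval, RingOfIntegers.coe_eq_algebraMap]
        ring
      have hval : v.valuation L (algebraMap (𝓞 L) L ((u : 𝓞 L) - 1)) ≤
          ((Multiplicative.ofAdd (-(n : ℤ)) : Multiplicative ℤ) : WithZero (Multiplicative ℤ)) := by
        have := congrArg (v.valuation L) hkey
        rw [Valuation.map_mul, hvy, mul_one] at this
        rw [this]
        exact hsub
      rw [v.valuation_of_algebraMap, HeightOneSpectrum.intValuation_apply] at hval
      exact (v.intValuation_le_pow_iff_dvd _ n).mp hval
    exact Quot.sound ((hr y z).mpr ⟨u, hu𝔣, hzval⟩)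
  have hgsurj : Function.Surjective g := by
    rintro ⟨𝔞, h𝔞0, γ, hγ0, h𝔞γ, hγc⟩
    have hγint : FractionalIdeal.spanSingleton (𝓞 L)⁰ (γ - 1) *
        (𝔟 : FractionalIdeal (𝓞 L)⁰ L) ≤ 1 := by
      have hmem : γ - 1 ∈ FractionalIdeal.spanSingleton (𝓞 L)⁰ γ +
          (1 : FractionalIdeal (𝓞 L)⁰ L) := by
        have h1 : γ ∈ ((FractionalIdeal.spanSingleton (𝓞 L)⁰ γ :
            FractionalIdeal (𝓞 L)⁰ L) : Submodule (𝓞 L) L) :=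
          FractionalIdeal.mem_spanSingleton_self _ _
        have h2 : (1 : L) ∈ ((1 : FractionalIdeal (𝓞 L)⁰ L) : Submodule (𝓞 L) L) :=
          FractionalIdeal.one_mem_one _
        have := sub_mem (Submodule.mem_sup_left h1) (Submodule.mem_sup_right h2)
        rwa [← Submodule.add_eq_sup, ← FractionalIdeal.coe_add] at this
      calc FractionalIdeal.spanSingleton (𝓞 L)⁰ (γ - 1) * (𝔟 : FractionalIdeal (𝓞 L)⁰ L)
          ≤ (FractionalIdeal.spanSingleton (𝓞 L)⁰ γ + 1) * (𝔟 : FractionalIdeal (𝓞 L)⁰ L) :=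
            mul_le_mul_left
              (FractionalIdeal.spanSingleton_le_iff_mem.mpr hmem) _
        _ = ((𝔞 : FractionalIdeal (𝓞 L)⁰ L) + (𝔟 : FractionalIdeal (𝓞 L)⁰ L)) := by
            rw [add_mul, one_mul, ← h𝔞γ]
        _ = ((𝔞 ⊔ 𝔟 : Ideal (𝓞 L)) : FractionalIdeal (𝓞 L)⁰ L) :=
            (FractionalIdeal.coeIdeal_sup _ _).symm
        _ ≤ 1 := FractionalIdeal.coeIdeal_le_one
    have hγS : γ ∈ S := by
      refine (hS' γ).mpr ⟨γ - 1, ?_, by ring⟩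
      exact aux_mem_of_val 𝔣 𝔟 h𝔣0 h𝔟0 (γ - 1) hγc hγint
    refine ⟨Quot.mk r ⟨γ, hγS⟩, ?_⟩
    have he : g (Quot.mk r ⟨γ, hγS⟩) = F ⟨γ, hγS⟩ := rfl
    rw [he]
    apply Subtype.ext
    show A ⟨γ, hγS⟩ = 𝔞
    apply FractionalIdeal.coeIdeal_injective (K := L)
    show ((A ⟨γ, hγS⟩ : Ideal (𝓞 L)) : FractionalIdeal (𝓞 L)⁰ L) =
      ((𝔞 : Ideal (𝓞 L)) : FractionalIdeal (𝓞 L)⁰ L)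
    rw [hA ⟨γ, hγS⟩, h𝔞γ]
  refine ⟨hi, hii, Equiv.ofBijective g ⟨hginj, hgsurj⟩, fun y => ?_⟩
  have he : (Equiv.ofBijective g ⟨hginj, hgsurj⟩) (Quot.mk r y) = F y := rfl
  rw [he]
  exact hA y
end

section
/- Let $L$ be a number field and $\nu : J_L \to \mathbb{Z}$. If $\prod_{\sigma \in J_L} \sigma(x)^{\nu(\sigma)} = 1$ for every $x \in L^{\times}$, then $\nu(\sigma) = 0$ for every $\sigma \in J_L$. -/
/-!
STATEMENT 12: Let `L` be a number field and `ν : J_L → ℤ`.  If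
`∏_{σ ∈ J_L} σ(x)^{ν σ} = 1` for every `x ∈ Lˣ`, then `ν σ = 0` for every `σ ∈ J_L`.
Here `J_L` is the (finite) set of field embeddings `L ↪ ℂ`.
-/

private lemma rootMultiplicity_finset_prod {R : Type*} [CommRing R] [IsDomain R]
    {ι : Type*} [DecidableEq ι] (s : Finset ι) (f : ι → Polynomial R)
    (hf : ∀ i ∈ s, f i ≠ 0) (a : R) :
    (∏ i ∈ s, f i).rootMultiplicity a = ∑ i ∈ s, (f i).rootMultiplicity a := by
  induction s using Finset.induction with
  | empty => simp
  | @insert i s hi ih =>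
    have h1 : f i ≠ 0 := hf i (Finset.mem_insert_self i s)
    have h2 : ∏ j ∈ s, f j ≠ 0 :=
      Finset.prod_ne_zero_iff.mpr fun j hj => hf j (Finset.mem_insert_of_mem hj)
    rw [Finset.prod_insert hi, Polynomial.rootMultiplicity_mul (mul_ne_zero h1 h2),
      ih fun j hj => hf j (Finset.mem_insert_of_mem hj), Finset.sum_insert hi]

theorem statement12 (L : Type*) [Field L] [NumberField L]
    (ν : (L →+* ℂ) → ℤ)
    (h : ∀ x : L, x ≠ 0 → ∏ σ : L →+* ℂ, σ x ^ ν σ = 1) :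
    ∀ σ : L →+* ℂ, ν σ = 0 := by
  classical
  intro τ
  obtain ⟨α, hα⟩ := Field.exists_primitive_element ℚ L
  -- embeddings are determined by their value at the primitive element
  have hinj : Function.Injective fun σ : L →+* ℂ => σ α := by
    have key := (Field.primitive_element_iff_algHom_eq_of_eval' ℚ ℂ
      (fun x => IsAlgClosed.splits _) α).mp hα
    intro σ₁ σ₂ hσ
    have : σ₁.toRatAlgHom = σ₂.toRatAlgHom := key hσ
    have := congrArg (AlgHom.toRingHom) this
    exact this
  set k : (L →+* ℂ) → ℕ := fun σ => (ν σ).toNat with hk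
  set m : (L →+* ℂ) → ℕ := fun σ => (-ν σ).toNat with hm
  -- the key multiplicative identity with natural exponents
  have key : ∀ x : L, x ≠ 0 →
      ∏ σ : L →+* ℂ, σ x ^ k σ = ∏ σ : L →+* ℂ, σ x ^ m σ := by
    intro x hx
    have hne : ∀ σ : L →+* ℂ, σ x ≠ 0 := fun σ => map_ne_zero σ |>.mpr hx
    have h1 := h x hx
    have h2 : ∀ σ : L →+* ℂ, σ x ^ ν σ = σ x ^ k σ / σ x ^ m σ := by
      intro σ
      rw [eq_div_iff (pow_ne_zero _ (hne σ)), ← zpow_natCast (σ x) (k σ),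
        ← zpow_natCast (σ x) (m σ), ← zpow_add₀ (hne σ)]
      congr 1
      simp only [hk, hm]
      omega
    rw [Finset.prod_congr rfl fun σ _ => h2 σ, Finset.prod_div_distrib] at h1
    rw [div_eq_one_iff_eq (Finset.prod_ne_zero_iff.mpr
      fun σ _ => pow_ne_zero _ (hne σ))] at h1
    exact h1
  -- the two polynomials
  set P : Polynomial ℂ :=
    ∏ σ : L →+* ℂ, (Polynomial.X - Polynomial.C (σ α)) ^ k σ with hP
  set Q : Polynomial ℂ :=
    ∏ σ : L →+* ℂ, (Polynomial.X - Polynomial.C (σ α)) ^ m σ with hQ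
  have heval : ∀ q : ℚ, (q : L) ≠ α → P.eval (q : ℂ) = Q.eval (q : ℂ) := by
    intro q hq
    have hx : (q : L) - α ≠ 0 := sub_ne_zero.mpr hq
    have e1 : ∀ σ : L →+* ℂ, (q : ℂ) - σ α = σ ((q : L) - α) := by
      intro σ; rw [map_sub, map_ratCast]
    rw [hP, hQ, Polynomial.eval_prod, Polynomial.eval_prod]
    simp only [Polynomial.eval_pow, Polynomial.eval_sub, Polynomial.eval_X,
      Polynomial.eval_C]
    calc ∏ σ : L →+* ℂ, ((q : ℂ) - σ α) ^ k σ
        = ∏ σ : L →+* ℂ, σ ((q : L) - α) ^ k σ := by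
          exact Finset.prod_congr rfl fun σ _ => by rw [e1 σ]
      _ = ∏ σ : L →+* ℂ, σ ((q : L) - α) ^ m σ := key _ hx
      _ = ∏ σ : L →+* ℂ, ((q : ℂ) - σ α) ^ m σ := by
          exact Finset.prod_congr rfl fun σ _ => by rw [e1 σ]
  have hPQ : P = Q := by
    apply Polynomial.eq_of_infinite_eval_eq
    have hsub : (fun q : ℚ => (q : ℂ)) '' {q : ℚ | (q : L) ≠ α} ⊆
        {x : ℂ | P.eval x = Q.eval x} := by
      rintro _ ⟨q, hq, rfl⟩
      exact heval q hq
    refine Set.Infinite.mono hsub ?_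
    apply Set.Infinite.image (fun a _ b _ hab => Rat.cast_injective hab)
    have hfin : {q : ℚ | (q : L) = α}.Finite :=
      Set.Subsingleton.finite fun a ha b hb => Rat.cast_injective (ha.trans hb.symm)
    have heq : {q : ℚ | (q : L) ≠ α} = Set.univ \ {q : ℚ | (q : L) = α} := by
      ext q; simp
    rw [heq]
    exact Set.infinite_univ.diff hfin
  -- compute root multiplicities at τ α
  have hmul : ∀ (f : (L →+* ℂ) → ℕ),
      (∏ σ : L →+* ℂ, (Polynomial.X - Polynomial.C (σ α)) ^ f σ).rootMultiplicity (τ α)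
        = f τ := by
    intro f
    rw [rootMultiplicity_finset_prod _ _
      (fun σ _ => pow_ne_zero _ (Polynomial.X_sub_C_ne_zero _))]
    have : ∀ σ : L →+* ℂ,
        ((Polynomial.X - Polynomial.C (σ α)) ^ f σ).rootMultiplicity (τ α)
          = if σ = τ then f σ else 0 := by
      intro σ
      by_cases hστ : σ = τ
      · subst hστ
        rw [Polynomial.rootMultiplicity_X_sub_C_pow, if_pos rfl]
      · rw [if_neg hστ]
        apply Polynomial.rootMultiplicity_eq_zero
        intro hroot
        apply hστ
        apply hinj
        have := hroot
        simp only [Polynomial.IsRoot, Polynomial.eval_pow, Polynomial.eval_sub,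
          Polynomial.eval_X, Polynomial.eval_C, pow_eq_zero_iff', sub_eq_zero] at this
        exact this.1.symm
    rw [Finset.sum_congr rfl fun σ _ => this σ, Finset.sum_ite_eq' Finset.univ τ f,
      if_pos (Finset.mem_univ τ)]
  have h1 : k τ = m τ := by
    have := congrArg (Polynomial.rootMultiplicity (τ α)) hPQ
    rwa [hP, hQ, hmul k, hmul m] at this
  simp only [hk, hm] at h1
  omega
end

section
/- Let $L$ be a number field and $\mu : J_L \to \mathbb{Z}$. Suppose there exists a finite-index subgroup $\Gamma \leq O_L^{\times}$ of the unit group such that $\prod_{\sigma \in J_L} \sigma(u)^{\mu(\sigma)} = 1$ for every $u \in \Gamma$. Then there exists an integer $w$ such that $\mu(\sigma) + \mu(c \circ \sigma) = w$ for every $\sigma \in J_L$, where $c$ denotes complex conjugation. -/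
/-!
STATEMENT 13: Let `L` be a number field and `μ : J_L → ℤ`.  Suppose there exists a
finite-index subgroup `Γ ≤ O_L^×` such that `∏_σ σ(u)^{μ σ} = 1` for every `u ∈ Γ`.
Then there is an integer `w` with `μ σ + μ (c ∘ σ) = w` for every `σ ∈ J_L`, where
`c` is complex conjugation.
-/

open NumberField NumberField.InfinitePlace NumberField.Units Finset

namespace Statement13Aux

open scoped Classical

variable {L : Type*} [Field L] [NumberField L]

/-- The place-wise coefficient `μ σ + μ (conj σ)`. -/
noncomputable def a (μ : (L →+* ℂ) → ℤ) (w : InfinitePlace L) : ℤ :=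
  μ w.embedding + μ (ComplexEmbedding.conjugate w.embedding)

lemma filter_mk_eq (w : InfinitePlace L) :
    Finset.univ.filter (fun σ : L →+* ℂ => mk σ = w) =
      {w.embedding, ComplexEmbedding.conjugate w.embedding} := by
  ext σ
  simp only [mem_filter, mem_univ, true_and, mem_insert, mem_singleton]
  constructor
  · intro h
    rcases mk_eq_iff.mp (h.trans (mk_embedding w).symm) with h1 | h1
    · exact Or.inl h1
    · right
      rw [← h1]
      exact (star_star σ).symm
  · rintro (rfl | rfl)
    · exact mk_embedding w
    · rw [mk_conjugate_eq]; exact mk_embedding w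

lemma sum_fiber_eq (μ : (L →+* ℂ) → ℤ) (w : InfinitePlace L) :
    ∑ σ ∈ Finset.univ.filter (fun σ : L →+* ℂ => mk σ = w), (μ σ : ℝ)
      = (a μ w : ℝ) / 2 * (mult w) := by
  rw [filter_mk_eq]
  by_cases h : IsReal w
  · have hre : ComplexEmbedding.conjugate w.embedding = w.embedding :=
      ComplexEmbedding.isReal_iff.mp (isReal_iff.mp h)
    rw [hre, Finset.pair_eq_singleton _, Finset.sum_singleton]
    simp only [a, hre, mult, if_pos h]
    push_cast
    ring
  · have hne : w.embedding ≠ ComplexEmbedding.conjugate w.embedding := by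
      intro h'
      exact h (isReal_iff.mpr (ComplexEmbedding.isReal_iff.mpr h'.symm))
    rw [Finset.sum_pair hne]
    simp only [a, mult, if_neg h]
    push_cast
    ring

lemma grouping (μ : (L →+* ℂ) → ℤ) (x : L) :
    ∑ σ : L →+* ℂ, (μ σ : ℝ) * Real.log (‖σ x‖)
      = ∑ w : InfinitePlace L, (a μ w : ℝ) / 2 * ((mult w) * Real.log (w x)) := by
  rw [← Finset.sum_fiberwise Finset.univ (fun σ : L →+* ℂ => mk σ)
    (fun σ => (μ σ : ℝ) * Real.log (‖σ x‖))]
  refine Finset.sum_congr rfl fun w _ => ?_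
  have h1 : ∀ σ ∈ Finset.univ.filter (fun σ : L →+* ℂ => mk σ = w),
      (μ σ : ℝ) * Real.log (‖σ x‖) = (μ σ : ℝ) * Real.log (w x) := by
    intro σ hσ
    rw [Finset.mem_filter] at hσ
    rw [← hσ.2, apply]
  rw [Finset.sum_congr rfl h1, ← Finset.sum_mul, sum_fiber_eq]
  ring

end Statement13Aux

theorem statement13 (L : Type*) [Field L] [NumberField L]
    (μ : (L →+* ℂ) → ℤ)
    (Γ : Subgroup (NumberField.RingOfIntegers L)ˣ) (hΓ : Γ.FiniteIndex)
    (hμ : ∀ u ∈ Γ, ∏ σ : L →+* ℂ, σ ((u : NumberField.RingOfIntegers L) : L) ^ μ σ = 1) :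
    ∃ w : ℤ, ∀ σ : L →+* ℂ, μ σ + μ ((starRingEnd ℂ).comp σ) = w := by
  classical
  set n := Γ.index with hn
  have hn0 : (n : ℝ) ≠ 0 := Nat.cast_ne_zero.mpr hΓ.index_ne_zero
  set c : InfinitePlace L → ℝ := fun w => (Statement13Aux.a μ w : ℝ) / 2 with hc
  -- Step 1: the log-linear relation holds for every unit.
  have key : ∀ u : (𝓞 L)ˣ,
      ∑ w : InfinitePlace L, c w * ((mult w) * Real.log (w ((u : 𝓞 L) : L))) = 0 := by
    intro u
    set x : L := ((u : 𝓞 L) : L) with hx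
    have hx0 : x ≠ 0 := NumberField.Units.coe_ne_zero u
    have h1 := hμ (u ^ n) (Γ.pow_index_mem u)
    have hcoe : (((u ^ n : (𝓞 L)ˣ) : 𝓞 L) : L) = x ^ n := by
      push_cast
      rfl
    rw [hcoe] at h1
    -- take absolute values and logs
    have h2 : ∏ σ : L →+* ℂ, ‖σ x‖ ^ ((n : ℤ) * μ σ) = 1 := by
      have := congrArg (‖·‖) h1
      rw [norm_prod, norm_one] at this
      rw [← this]
      refine Finset.prod_congr rfl fun σ _ => ?_
      rw [norm_zpow, map_pow, norm_pow, ← zpow_natCast ‖σ x‖ n, ← zpow_mul]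
    have habs : ∀ σ : L →+* ℂ, ‖σ x‖ ≠ 0 := fun σ => by
      simp [map_ne_zero, hx0]
    have h3 : ∑ σ : L →+* ℂ, ((n : ℤ) * μ σ : ℝ) * Real.log (‖σ x‖) = 0 := by
      have := congrArg Real.log h2
      rw [Real.log_prod (fun σ _ => zpow_ne_zero _ (habs σ)), Real.log_one] at this
      rw [← this]
      refine Finset.sum_congr rfl fun σ _ => ?_
      rw [Real.log_zpow]
      push_cast
      ring
    have h4 : ∑ σ : L →+* ℂ, (μ σ : ℝ) * Real.log (‖σ x‖) = 0 := by
      have : (n : ℝ) * ∑ σ : L →+* ℂ, (μ σ : ℝ) * Real.log (‖σ x‖) = 0 := by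
        rw [Finset.mul_sum, ← h3]
        refine Finset.sum_congr rfl fun σ _ => ?_
        push_cast
        ring
      exact (mul_eq_zero.mp this).resolve_left hn0
    rw [Statement13Aux.grouping μ x] at h4
    exact h4
  -- Step 2: build a linear functional vanishing on the unit lattice.
  set d : {w : InfinitePlace L // w ≠ NumberField.Units.dirichletUnitTheorem.w₀} → ℝ :=
    fun w => c w.1 - c NumberField.Units.dirichletUnitTheorem.w₀ with hd
  set ψ : ({w : InfinitePlace L // w ≠ NumberField.Units.dirichletUnitTheorem.w₀} → ℝ) →ₗ[ℝ] ℝ :=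
    ∑ i, d i • LinearMap.proj i with hψ
  have hψ_apply : ∀ v, ψ v = ∑ i, d i * v i := by
    intro v
    simp [hψ, LinearMap.sum_apply, LinearMap.smul_apply, LinearMap.proj_apply, smul_eq_mul]
  have hψ_unit : ∀ u : (𝓞 L)ˣ, ψ (logEmbedding L (Additive.ofMul u)) = 0 := by
    intro u
    set x : L := ((u : 𝓞 L) : L) with hx
    rw [hψ_apply]
    have hsub : ∀ (f : InfinitePlace L → ℝ),
        ∑ w : {w : InfinitePlace L // w ≠ NumberField.Units.dirichletUnitTheorem.w₀}, f w.1
          = ∑ w ∈ Finset.univ.erase NumberField.Units.dirichletUnitTheorem.w₀, f w := by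
      intro f
      exact (Finset.sum_subtype _ (fun w => by simp [Finset.mem_erase]) f).symm
    have herase : ∀ (f : InfinitePlace L → ℝ),
        ∑ w ∈ Finset.univ.erase NumberField.Units.dirichletUnitTheorem.w₀, f w
          = (∑ w : InfinitePlace L, f w) - f NumberField.Units.dirichletUnitTheorem.w₀ := by
      intro f
      rw [eq_sub_iff_add_eq, Finset.sum_erase_add _ _ (Finset.mem_univ _)]
    have hlog : ∀ i : {w : InfinitePlace L // w ≠ NumberField.Units.dirichletUnitTheorem.w₀},
        logEmbedding L (Additive.ofMul u) i = (mult i.1) * Real.log (i.1 x) :=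
      fun i => rfl
    calc ∑ i, d i * logEmbedding L (Additive.ofMul u) i
        = ∑ i : {w : InfinitePlace L // w ≠ NumberField.Units.dirichletUnitTheorem.w₀},
            (c i.1 * ((mult i.1) * Real.log (i.1 x))
              - c NumberField.Units.dirichletUnitTheorem.w₀ * ((mult i.1) * Real.log (i.1 x))) := by
          refine Finset.sum_congr rfl fun i _ => ?_
          rw [hlog, hd]
          ring
      _ = (∑ i : {w : InfinitePlace L // w ≠ NumberField.Units.dirichletUnitTheorem.w₀},
              c i.1 * ((mult i.1) * Real.log (i.1 x)))
            - c NumberField.Units.dirichletUnitTheorem.w₀ *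
              ∑ i : {w : InfinitePlace L // w ≠ NumberField.Units.dirichletUnitTheorem.w₀},
                (mult i.1) * Real.log (i.1 x) := by
          rw [Finset.sum_sub_distrib, Finset.mul_sum]
      _ = 0 := by
          rw [hsub (fun w => c w * ((mult w) * Real.log (w x))),
            hsub (fun w => (mult w) * Real.log (w x)),
            herase, herase, key u]
          have hs : ∑ w : InfinitePlace L, (mult w : ℝ) * Real.log (w x) = 0 := by
            have h5 := NumberField.Units.dirichletUnitTheorem.sum_logEmbedding_component (K := L) u
            have h6 := hsub (fun w => (mult w : ℝ) * Real.log (w x))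
            rw [herase] at h6
            have h7 : ∑ w : {w : InfinitePlace L // w ≠ NumberField.Units.dirichletUnitTheorem.w₀},
                (mult w.1 : ℝ) * Real.log (w.1 x) =
                - (mult (NumberField.Units.dirichletUnitTheorem.w₀ : InfinitePlace L) : ℝ) *
                  Real.log ((NumberField.Units.dirichletUnitTheorem.w₀ : InfinitePlace L) x) := by
              rw [← h5]
              exact Finset.sum_congr rfl fun i _ => (hlog i).symm
            rw [h7] at h6
            linarith [h6]
          rw [hs]
          ring
  -- Step 3: the functional vanishes identically, so `c` is constant.
  have hker : (⊤ : Submodule ℝ ({w : InfinitePlace L // w ≠ NumberField.Units.dirichletUnitTheorem.w₀} → ℝ))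
      ≤ LinearMap.ker ψ := by
    rw [← NumberField.Units.dirichletUnitTheorem.unitLattice_span_eq_top L]
    rw [Submodule.span_le]
    rintro v hv
    obtain ⟨y, -, rfl⟩ := Submodule.mem_map.mp hv
    exact hψ_unit y.toMul
  have hd0 : ∀ i : {w : InfinitePlace L // w ≠ NumberField.Units.dirichletUnitTheorem.w₀}, d i = 0 := by
    intro i
    have := hker (Submodule.mem_top (x := Pi.single i (1 : ℝ)))
    rw [LinearMap.mem_ker, hψ_apply] at this
    rw [← this]
    rw [Finset.sum_eq_single i]
    · simp
    · intro j _ hj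
      simp [Pi.single_apply, hj]
    · simp
  have hcconst : ∀ w : InfinitePlace L, c w = c NumberField.Units.dirichletUnitTheorem.w₀ := by
    intro w
    by_cases hw : w = NumberField.Units.dirichletUnitTheorem.w₀
    · rw [hw]
    · have := hd0 ⟨w, hw⟩
      rw [hd] at this
      have : c w - c NumberField.Units.dirichletUnitTheorem.w₀ = 0 := this
      linarith
  have haconst : ∀ w : InfinitePlace L,
      Statement13Aux.a μ w = Statement13Aux.a μ NumberField.Units.dirichletUnitTheorem.w₀ := by
    intro w
    have := hcconst w
    rw [hc] at this
    simp only at this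
    have h2 : (Statement13Aux.a μ w : ℝ) = (Statement13Aux.a μ NumberField.Units.dirichletUnitTheorem.w₀ : ℝ) := by
      linarith
    exact_mod_cast h2
  -- Conclusion
  refine ⟨Statement13Aux.a μ NumberField.Units.dirichletUnitTheorem.w₀, fun σ => ?_⟩
  have hconj : (starRingEnd ℂ).comp σ = ComplexEmbedding.conjugate σ := rfl
  rw [hconj, ← haconst (mk σ)]
  rcases embedding_mk_eq σ with h | h
  · rw [Statement13Aux.a, h]
  · have hcc : ComplexEmbedding.conjugate (ComplexEmbedding.conjugate σ) = σ := star_star σ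
    rw [Statement13Aux.a, h, hcc]
    exact add_comm _ _
end

section
/- Let $K$ be a CM-field, i.e. a number field admitting a field automorphism $c_K \neq \mathrm{id}$ with $\sigma \circ c_K = c \circ \sigma$ for every embedding $\sigma : K \hookrightarrow \mathbb{C}$ ($c$ = complex conjugation). Let $\mu : J_K \to \mathbb{Z}$ and $w \in \mathbb{Z}$ satisfy $\mu(\sigma) + \mu(c \circ \sigma) = w$ for every $\sigma \in J_K$. Then the subgroup $\{u \in O_K^{\times} : \prod_{\sigma \in J_K} \sigma(u)^{\mu(\sigma)} = 1\}$ has finite index in $O_K^{\times}$. -/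
open NumberField

private theorem aux_norm (K : Type*) [Field K] [NumberField K]
    (μ : (K →+* ℂ) → ℤ) (w : ℤ)
    (hμ : ∀ σ : K →+* ℂ, μ σ + μ ((starRingEnd ℂ).comp σ) = w)
    (g : (K →+* ℂ) → (K →+* ℂ)) (hginj : Function.Injective g)
    (hg : ∀ σ, g ((starRingEnd ℂ).comp σ) = (starRingEnd ℂ).comp (g σ))
    (u : (𝓞 K)ˣ) :
    ‖∏ σ : K →+* ℂ, (g σ) (algebraMap (𝓞 K) K u) ^ (μ σ)‖ = 1 := by
  have hv : (algebraMap (𝓞 K) K u) ≠ 0 := by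
    exact RingOfIntegers.coe_ne_zero_iff.mpr (Units.ne_zero u)
  set v : K := algebraMap (𝓞 K) K u with hvdef
  have hgv : ∀ σ : K →+* ℂ, (g σ) v ≠ 0 := fun σ => (map_ne_zero (g σ)).mpr hv
  have hinv : Function.Involutive (fun σ : K →+* ℂ => (starRingEnd ℂ).comp σ) := by
    intro σ; ext x; simp
  set e := hinv.toPerm with he
  have P_eq : ‖∏ σ : K →+* ℂ, (g σ) v ^ (μ σ)‖ = ∏ σ : K →+* ℂ, ‖(g σ) v‖ ^ (μ σ) := by
    rw [norm_prod]; exact Finset.prod_congr rfl fun σ _ => norm_zpow _ _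
  rw [P_eq]
  set P := ∏ σ : K →+* ℂ, ‖(g σ) v‖ ^ (μ σ) with hP
  have hP2 : P * P = 1 := by
    have reidx : P = ∏ σ : K →+* ℂ, ‖(g σ) v‖ ^ (μ (e σ)) := by
      rw [hP, ← Equiv.prod_comp e (fun σ => ‖(g σ) v‖ ^ (μ σ))]
      refine Finset.prod_congr rfl fun σ _ => ?_
      have : (g (e σ)) v = (starRingEnd ℂ) ((g σ) v) := by
        have := hg σ
        simp only [he, Function.Involutive.coe_toPerm]
        rw [this]; rfl
      rw [this]
      simp
    nth_rewrite 2 [reidx]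
    rw [← Finset.prod_mul_distrib]
    have : ∀ σ : K →+* ℂ, ‖(g σ) v‖ ^ (μ σ) * ‖(g σ) v‖ ^ (μ (e σ)) = ‖(g σ) v‖ ^ w := by
      intro σ
      rw [← zpow_add₀ (by simpa using hgv σ)]
      congr 1
      have : e σ = (starRingEnd ℂ).comp σ := rfl
      rw [this, hμ σ]
    rw [Finset.prod_congr rfl fun σ _ => this σ, Finset.prod_zpow]
    have hnorm : ∏ σ : K →+* ℂ, ‖(g σ) v‖ = 1 := by
      have hbij : Function.Bijective g := (Finite.injective_iff_bijective).mp hginj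
      have hnv : ∏ τ : K →+* ℂ, τ v = algebraMap ℚ ℂ (Algebra.norm ℚ v) := by
        rw [Algebra.norm_eq_prod_embeddings ℚ ℂ v]
        exact Fintype.prod_equiv (RingHom.equivRatAlgHom K ℂ) _ _ fun σ => rfl
      calc ∏ σ : K →+* ℂ, ‖(g σ) v‖ = ∏ τ : K →+* ℂ, ‖τ v‖ :=
            Equiv.prod_comp (Equiv.ofBijective g hbij) (fun τ : K →+* ℂ => ‖τ v‖)
        _ = ‖∏ τ : K →+* ℂ, τ v‖ := (norm_prod _ _).symm
        _ = ‖algebraMap ℚ ℂ (Algebra.norm ℚ v)‖ := by rw [hnv]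
        _ = 1 := by
            rw [show (algebraMap ℚ ℂ) (Algebra.norm ℚ v) = ((Algebra.norm ℚ v : ℚ) : ℂ) from rfl,
              Complex.norm_ratCast]
            rw [← Rat.cast_abs]
            exact_mod_cast _root_.NumberField.Units.norm K u
    rw [hnorm, one_zpow]
  have hPnonneg : 0 ≤ P := Finset.prod_nonneg fun σ _ => zpow_nonneg (norm_nonneg _) _
  nlinarith [hP2, hPnonneg]



/-!
STATEMENT 14: Let `K` be a CM-field, i.e. a number field admitting a field automorphism
`c_K ≠ id` with `σ ∘ c_K = c ∘ σ` for every embedding `σ : K ↪ ℂ` (`c` = complex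
conjugation).  Let `μ : J_K → ℤ` and `w : ℤ` satisfy `μ σ + μ (c ∘ σ) = w` for every
`σ ∈ J_K`.  Then the subgroup `{u ∈ O_K^× : ∏_σ σ(u)^{μ σ} = 1}` has finite index in
`O_K^×`.  (The subgroup is realized as the kernel of the group homomorphism
`O_K^× → ℂˣ`, `u ↦ ∏_σ σ(u)^{μ σ}`.)
-/

theorem statement14 (K : Type*) [Field K] [NumberField K]
    (hCM : ∃ cK : K ≃+* K, cK ≠ RingEquiv.refl K ∧
      ∀ (σ : K →+* ℂ) (x : K), σ (cK x) = (starRingEnd ℂ) (σ x))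
    (μ : (K →+* ℂ) → ℤ) (w : ℤ)
    (hμ : ∀ σ : K →+* ℂ, μ σ + μ ((starRingEnd ℂ).comp σ) = w) :
    (MonoidHom.ker
      (∏ σ : K →+* ℂ,
        (zpowGroupHom (μ σ) : ℂˣ →* ℂˣ).comp
          (Units.map ((σ.comp (algebraMap (NumberField.RingOfIntegers K) K)).toMonoidHom)))).FiniteIndex := by
  obtain ⟨cK, -, hc⟩ := hCM
  set φ : (𝓞 K)ˣ →* ℂˣ :=
    ∏ σ : K →+* ℂ, (zpowGroupHom (μ σ) : ℂˣ →* ℂˣ).comp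
      (Units.map ((σ.comp (algebraMap (𝓞 K) K)).toMonoidHom)) with hφ
  have hφval : ∀ u : (𝓞 K)ˣ, ((φ u : ℂˣ) : ℂ)
      = ∏ σ : K →+* ℂ, (σ (algebraMap (𝓞 K) K ↑u)) ^ (μ σ) := by
    intro u
    rw [hφ]
    simp [zpowGroupHom]
  set L : IntermediateField ℚ ℂ := IntermediateField.normalClosure ℚ K ℂ with hL
  haveI : NumberField L := NumberField.of_module_finite ℚ L
  have hmem : ∀ (σ : K →+* ℂ) (x : K), σ x ∈ L := fun σ x =>
    σ.toRatAlgHom.fieldRange_le_normalClosure ⟨x, rfl⟩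
  set r : (K →+* ℂ) → (K →+* L) := fun σ => σ.codRestrict L.toSubfield (hmem σ) with hr
  have hrval : ∀ (σ : K →+* ℂ) (x : K), (algebraMap L ℂ) (r σ x) = σ x := fun σ x => rfl
  set f : (L →+* ℂ) → (K →+* ℂ) → (K →+* ℂ) := fun ψ σ => ψ.comp (r σ) with hf
  have hfinj : ∀ ψ : L →+* ℂ, Function.Injective (f ψ) := by
    intro ψ σ₁ σ₂ h
    ext x
    have h1 : ψ (r σ₁ x) = ψ (r σ₂ x) := by
      have := congrArg (fun t : K →+* ℂ => t x) h
      simpa [hf] using this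
    have h2 : r σ₁ x = r σ₂ x := ψ.injective h1
    have := congrArg (Subtype.val) h2
    exact this
  have hfint : ∀ (ψ : L →+* ℂ) (σ : K →+* ℂ),
      f ψ ((starRingEnd ℂ).comp σ) = (starRingEnd ℂ).comp (f ψ σ) := by
    intro ψ σ
    ext x
    have h1 : r ((starRingEnd ℂ).comp σ) x = r σ (cK x) := by
      apply Subtype.ext
      show (starRingEnd ℂ) (σ x) = σ (cK x)
      exact (hc σ x).symm
    show ψ (r ((starRingEnd ℂ).comp σ) x) = (starRingEnd ℂ) (ψ (r σ x))
    rw [h1]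
    exact hc (f ψ σ) x
  set y : (𝓞 K)ˣ → L := fun u => ∏ σ : K →+* ℂ, (r σ (algebraMap (𝓞 K) K ↑u)) ^ (μ σ) with hy
  have hyval : ∀ u : (𝓞 K)ˣ, (algebraMap L ℂ) (y u) = ((φ u : ℂˣ) : ℂ) := by
    intro u
    rw [hy, hφval u, map_prod]
    exact Finset.prod_congr rfl fun σ _ => by rw [map_zpow₀, hrval]
  have hint : ∀ u : (𝓞 K)ˣ, IsIntegral ℤ (y u) := by
    intro u
    rw [← isIntegral_algebraMap_iff (algebraMap L ℂ).injective]
    rw [hyval u, hφval u]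
    refine IsIntegral.prod _ fun σ _ => ?_
    set uK : Kˣ := Units.map (algebraMap (𝓞 K) K).toMonoidHom u with huK
    have h1 : (σ (algebraMap (𝓞 K) K ↑u)) ^ (μ σ) = σ ((uK ^ (μ σ) : Kˣ) : K) := by
      rw [← map_zpow₀]
      congr 1
      exact (Units.val_zpow_eq_zpow_val uK (μ σ)).symm
    have h2 : ((uK ^ (μ σ) : Kˣ) : K)
        = algebraMap (𝓞 K) K ((u ^ (μ σ) : (𝓞 K)ˣ) : 𝓞 K) := by
      rw [huK, ← map_zpow (Units.map (algebraMap (𝓞 K) K).toMonoidHom) u (μ σ)]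
      rfl
    rw [h1, h2]
    exact (RingOfIntegers.isIntegral_coe _).map σ.toIntAlgHom
  have hnorm1 : ∀ (u : (𝓞 K)ˣ) (ψ : L →+* ℂ), ‖ψ (y u)‖ = 1 := by
    intro u ψ
    have hval : ψ (y u) = ∏ σ : K →+* ℂ, (f ψ σ) (algebraMap (𝓞 K) K ↑u) ^ (μ σ) := by
      rw [hy]
      simp only [map_prod]
      exact Finset.prod_congr rfl fun σ _ => by rw [map_zpow₀]; rfl
    rw [hval]
    exact aux_norm K μ w hμ (f ψ) (hfinj ψ) (hfint ψ) u
  -- the finite set of candidates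
  have hS : {x : L | IsIntegral ℤ x ∧ ∀ ψ : L →+* ℂ, ‖ψ x‖ ≤ 1}.Finite :=
    Embeddings.finite_of_norm_le L ℂ 1
  have himg : (Units.val '' (φ.range : Set ℂˣ)).Finite := by
    refine Set.Finite.subset (hS.image (algebraMap L ℂ)) ?_
    rintro - ⟨-, ⟨u, rfl⟩, rfl⟩
    exact ⟨y u, ⟨hint u, fun ψ => (hnorm1 u ψ).le⟩, hyval u⟩
  have hfin : Finite φ.range := by
    have : ((φ.range : Set ℂˣ)).Finite :=
      Set.Finite.of_finite_image himg (Units.val_injective.injOn)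
    exact this.to_subtype
  have : Finite ((𝓞 K)ˣ ⧸ φ.ker) :=
    Finite.of_equiv _ (QuotientGroup.quotientKerEquivRange φ).symm.toEquiv
  exact Subgroup.finiteIndex_of_finite_quotient (H := φ.ker)
end
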